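/- arXiv:2302.14412 — 9 statements merged into one kernel-verified Lean document; each statement's English description precedes it below -/
import Mathlib

section
/- Let P be a probability measure on a finite probability space and let X1, Y1, X2, Y2, Z be events with P(X1 ∩ X2 ∩ Z) > 0, P(X1 ∩ Z) > 0, P(X2 ∩ Z) > 0 and P(Z) > 0. Assume the two conditional-independence factorizations P(X1 ∩ X2 | Z) = P(X1 | Z) · P(X2 | Z) and P(X1 ∩ Y1 ∩ X2 ∩ Y2 | Z) = P(X1 ∩ Y1 | Z) · P(X2 ∩ Y2 | Z). Then P(Y1 ∩ Y2 | X1 ∩ X2 ∩ Z) = P(Y1 | X1 ∩ Z) · P(Y2 | X2 ∩ Z). -/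
/-- The probability of an event `A` under a probability mass function `P` on a finite
space. -/
noncomputable def pr {Ω : Type*} (P : Ω → ℝ) (A : Finset Ω) : ℝ := ∑ ω ∈ A, P ω

/-- The conditional probability `P(A | B) = P(A ∩ B) / P(B)`. -/
noncomputable def cpr {Ω : Type*} [DecidableEq Ω] (P : Ω → ℝ) (A B : Finset Ω) : ℝ :=
  pr P (A ∩ B) / pr P B

/-- Let `P` be a probability measure on a finite probability space and
`X1, Y1, X2, Y2, Z` events with `P(X1 ∩ X2 ∩ Z) > 0`, `P(X1 ∩ Z) > 0`, `P(X2 ∩ Z) > 0`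
and `P(Z) > 0`. Assume the conditional-independence factorizations
`P(X1 ∩ X2 | Z) = P(X1 | Z) · P(X2 | Z)` and
`P(X1 ∩ Y1 ∩ X2 ∩ Y2 | Z) = P(X1 ∩ Y1 | Z) · P(X2 ∩ Y2 | Z)`. Then
`P(Y1 ∩ Y2 | X1 ∩ X2 ∩ Z) = P(Y1 | X1 ∩ Z) · P(Y2 | X2 ∩ Z)`. -/
theorem stmt0 {Ω : Type*} [Fintype Ω] [DecidableEq Ω] (P : Ω → ℝ)
    (hpos : ∀ ω, 0 ≤ P ω) (hsum : ∑ ω, P ω = 1)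
    (X1 Y1 X2 Y2 Z : Finset Ω)
    (h1 : 0 < pr P (X1 ∩ X2 ∩ Z))
    (h2 : 0 < pr P (X1 ∩ Z))
    (h3 : 0 < pr P (X2 ∩ Z))
    (h4 : 0 < pr P Z)
    (hci1 : cpr P (X1 ∩ X2) Z = cpr P X1 Z * cpr P X2 Z)
    (hci2 : cpr P (X1 ∩ Y1 ∩ X2 ∩ Y2) Z = cpr P (X1 ∩ Y1) Z * cpr P (X2 ∩ Y2) Z) :
    cpr P (Y1 ∩ Y2) (X1 ∩ X2 ∩ Z) = cpr P Y1 (X1 ∩ Z) * cpr P Y2 (X2 ∩ Z) := by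
  have e1 : (X1 ∩ Y1 ∩ X2 ∩ Y2) ∩ Z = (Y1 ∩ Y2) ∩ (X1 ∩ X2 ∩ Z) := by
    ext ω; simp only [Finset.mem_inter]; tauto
  have e2 : (X1 ∩ Y1) ∩ Z = Y1 ∩ (X1 ∩ Z) := by
    ext ω; simp only [Finset.mem_inter]; tauto
  have e3 : (X2 ∩ Y2) ∩ Z = Y2 ∩ (X2 ∩ Z) := by
    ext ω; simp only [Finset.mem_inter]; tauto
  unfold cpr at hci1 hci2 ⊢
  rw [e1, e2, e3] at hci2
  simp only [Finset.inter_assoc] at hci1 hci2 h1 ⊢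
  set a := pr P (Y1 ∩ (Y2 ∩ (X1 ∩ (X2 ∩ Z)))) with ha
  set b := pr P (Y1 ∩ (X1 ∩ Z)) with hb
  set d := pr P (Y2 ∩ (X2 ∩ Z)) with hd
  set e := pr P (X1 ∩ (X2 ∩ Z)) with he
  set c := pr P (X1 ∩ Z) with hc
  set f := pr P (X2 ∩ Z) with hf
  set z := pr P Z with hz0
  have hz := h4.ne'
  have h1' := h1.ne'
  have h2' := h2.ne'
  have h3' := h3.ne'
  have key1 : e * z = c * f := by
    field_simp at hci1
    exact mul_right_cancel₀ hz (by rw [hci1])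
  have key2 : a * z = b * d := by
    field_simp at hci2
    exact mul_right_cancel₀ hz (by rw [hci2])
  rw [div_mul_div_comm, div_eq_div_iff h1' (by positivity)]
  linear_combination e * key2 - a * key1
end

section
/- Let G be a finite DAG and let G' be obtained from G by adding a single new vertex H (a root) as a parent of an arbitrary subset of the vertices of G. If π is an elimination order for G (all vertices of G) with width w on the moral graph of G, then the order π' = ⟨π, H⟩, which eliminates the vertices of G in the order π and then eliminates H, is an elimination order for G' whose width w' on the moral graph of G' satisfies w' ≤ w + 1. -/
/-! Preliminaries: vertex elimination, elimination orders, clusters, width,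
moral graphs of DAGs. -/

variable {V : Type*}

/-- Eliminating a vertex `v` from a simple graph: connect every pair of neighbors of `v`,
then delete `v` (here: make `v` isolated, keeping the vertex type). -/
def elimVertex (G : SimpleGraph V) (v : V) : SimpleGraph V where
  Adj x y := x ≠ y ∧ x ≠ v ∧ y ≠ v ∧ (G.Adj x y ∨ (G.Adj x v ∧ G.Adj y v))
  symm := by
    constructor
    rintro x y ⟨hxy, hxv, hyv, h⟩
    exact ⟨hxy.symm, hyv, hxv, h.imp (fun a => a.symm) And.symm⟩
  loopless := by constructor; rintro x ⟨h, -⟩; exact h rfl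

/-- Eliminating a list of vertices successively. -/
def elimList (G : SimpleGraph V) (l : List V) : SimpleGraph V := l.foldl elimVertex G

/-- The cluster of the `i`-th vertex of an elimination order `π`: the vertex together
with its neighbors in the graph just before it is eliminated. -/
def cluster (G : SimpleGraph V) (π : List V) (i : Fin π.length) : Set V :=
  insert (π.get i) ((elimList G (π.take i)).neighborSet (π.get i))

/-- The width of an elimination order: the size of its largest cluster minus one. -/
noncomputable def orderWidth (G : SimpleGraph V) (π : List V) : ℕ :=
  (Finset.univ.sup fun i : Fin π.length => (cluster G π i).ncard) - 1

/-- An elimination order for a graph on `V`: a list of all vertices without duplicates. -/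
def IsElimOrder (π : List V) : Prop := π.Nodup ∧ ∀ v : V, v ∈ π

/-- A `U`-constrained elimination order: the vertices of `U` appear last. -/
def IsUConstrained (U : Set V) (π : List V) : Prop :=
  ∃ l₁ l₂, π = l₁ ++ l₂ ∧ (∀ v ∈ l₁, v ∉ U) ∧ (∀ v ∈ l₂, v ∈ U)

/-- Acyclicity of a directed graph given by an edge (parent) relation `E`. -/
def IsAcyclicDigraph (E : V → V → Prop) : Prop := ∀ v, ¬ Relation.TransGen E v v

/-- A root of a DAG: a vertex with no parents. -/
def IsRoot (E : V → V → Prop) (v : V) : Prop := ∀ u, ¬ E u v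

/-- The moral graph of a DAG: edge between distinct vertices iff one is a parent of
the other or they have a common child. -/
def MoralGraph (E : V → V → Prop) : SimpleGraph V where
  Adj x y := x ≠ y ∧ (E x y ∨ E y x ∨ ∃ z, E x z ∧ E y z)
  symm := by
    constructor
    rintro x y ⟨hxy, h⟩
    exact ⟨hxy.symm, by tauto⟩
  loopless := by constructor; rintro x ⟨h, -⟩; exact h rfl

/-- Adding a new root vertex (`none`) as a parent of the vertices in `Z`. -/
def addRootE (E : V → V → Prop) (Z : Set V) : Option V → Option V → Prop :=
  fun x y => (∃ a b, E a b ∧ x = some a ∧ y = some b) ∨ (x = none ∧ ∃ b ∈ Z, y = some b)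

section Aux

lemma elimList_some_iff {V : Type*} (G : SimpleGraph V) (G' : SimpleGraph (Option V))
    (h : ∀ a b, G'.Adj (some a) (some b) ↔ G.Adj a b) (l : List V) :
    ∀ a b, (elimList G' (l.map some)).Adj (some a) (some b) ↔ (elimList G l).Adj a b := by
  induction l generalizing G G' with
  | nil => simpa [elimList] using h
  | cons v l ih =>
    intro a b
    show (elimList (elimVertex G' (some v)) (l.map some)).Adj _ _ ↔
      (elimList (elimVertex G v) l).Adj a b
    refine ih _ _ (fun a b => ?_) a b
    simp only [elimVertex, h, ne_eq, Option.some.injEq]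

lemma isolated_elimList {V : Type*} (G : SimpleGraph V) (v : V)
    (h : ∀ y, ¬ G.Adj v y) (l : List V) : ∀ y, ¬ (elimList G l).Adj v y := by
  induction l generalizing G with
  | nil => exact h
  | cons u l ih =>
    refine ih _ (fun y hy => ?_)
    obtain ⟨-, -, -, hy⟩ := hy
    rcases hy with hy | ⟨hy, -⟩ <;> exact h _ hy

lemma mem_isolated_elimList {V : Type*} (G : SimpleGraph V) (v : V) (l : List V)
    (hv : v ∈ l) : ∀ y, ¬ (elimList G l).Adj v y := by
  induction l generalizing G with
  | nil => simp at hv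
  | cons u l ih =>
    rcases List.mem_cons.1 hv with rfl | hv
    · exact isolated_elimList _ _ (by rintro y ⟨-, hx, -⟩; exact hx rfl) l
    · exact ih _ hv

end Aux

/-- Let `G` be a finite DAG (edge relation `E` on `V`) and `G'` be
obtained from `G` by adding a single new root vertex `H` (here `none : Option V`) as a
parent of an arbitrary subset `Z` of the vertices of `G`. If `π` is an elimination order
for `G` (all vertices of `G`) with width `w` on the moral graph of `G`, then the order
`π' = ⟨π, H⟩` is an elimination order for `G'` whose width `w'` on the moral graph of
`G'` satisfies `w' ≤ w + 1`. -/
theorem stmt2 {V : Type*} [Fintype V] (E : V → V → Prop)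
    (hdag : IsAcyclicDigraph E) (Z : Set V)
    (π : List V) (hπ : IsElimOrder π) (w : ℕ)
    (hw : orderWidth (MoralGraph E) π = w) :
    IsElimOrder (π.map some ++ [(none : Option V)]) ∧
      orderWidth (MoralGraph (addRootE E Z)) (π.map some ++ [none]) ≤ w + 1 := by
  classical
  set π' : List (Option V) := π.map some ++ [none] with hπ'
  have h0 : ∀ a b, (MoralGraph (addRootE E Z)).Adj (some a) (some b) ↔
      (MoralGraph E).Adj a b := by
    intro a b
    simp only [MoralGraph, addRootE, ne_eq, Option.some.injEq, SimpleGraph.Adj]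
    constructor
    · rintro ⟨hab, h⟩
      refine ⟨hab, ?_⟩
      rcases h with (⟨a', b', h, ha, hb⟩ | ⟨h, -⟩) | (⟨a', b', h, ha, hb⟩ | ⟨h, -⟩) |
        ⟨z, (⟨a', b', h1, ha, hz⟩ | ⟨hn, -⟩), h2⟩
      · cases ha; cases hb; exact Or.inl h
      · exact absurd h (by simp)
      · cases ha; cases hb; exact Or.inr (Or.inl h)
      · exact absurd h (by simp)
      · rcases h2 with ⟨a'', b'', h3, ha'', hz'⟩ | ⟨hn, -⟩
        · cases ha; cases ha''; rw [hz'] at hz; cases Option.some.inj hz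
          exact Or.inr (Or.inr ⟨b', h1, h3⟩)
        · exact absurd hn (by simp)
      · exact absurd hn (by simp)
    · rintro ⟨hab, h⟩
      refine ⟨hab, ?_⟩
      rcases h with h | h | ⟨z, h1, h2⟩
      · exact Or.inl (Or.inl ⟨a, b, h, rfl, rfl⟩)
      · exact Or.inr (Or.inl (Or.inl ⟨b, a, h, rfl, rfl⟩))
      · exact Or.inr (Or.inr ⟨some z, Or.inl ⟨a, z, h1, rfl, rfl⟩,
          Or.inl ⟨b, z, h2, rfl, rfl⟩⟩)
  have helim : IsElimOrder π' := by
    constructor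
    · have h1 : (π.map some).Nodup := hπ.1.map (Option.some_injective V)
      simp [hπ', List.nodup_append, h1]
    · intro v
      cases v with
      | none => simp [hπ']
      | some a => simp [hπ', hπ.2 a]
  refine ⟨helim, ?_⟩
  have hlen : π'.length = π.length + 1 := by simp [hπ']
  have hsupE : ∀ j : Fin π.length, (cluster (MoralGraph E) π j).ncard ≤ w + 1 := by
    intro j
    have h1 : (cluster (MoralGraph E) π j).ncard ≤
        Finset.univ.sup fun i : Fin π.length => (cluster (MoralGraph E) π i).ncard :=
      Finset.le_sup (f := fun i : Fin π.length => (cluster (MoralGraph E) π i).ncard)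
        (Finset.mem_univ j)
    unfold orderWidth at hw
    omega
  have key : ∀ i : Fin π'.length,
      (cluster (MoralGraph (addRootE E Z)) π' i).ncard ≤ w + 2 := by
    intro i
    have hi : (i : ℕ) < π.length + 1 := hlen ▸ i.2
    rcases lt_or_ge (i : ℕ) π.length with hlt | hge
    · set j : Fin π.length := ⟨i, hlt⟩ with hj
      have hget : π'.get i = some (π.get j) := by
        simp only [hπ', List.get_eq_getElem]
        rw [List.getElem_append_left (by simpa using hlt)]
        simp
        rfl
      have htake : π'.take i = (π.take i).map some := by
        simp only [hπ']
        rw [List.take_append_of_le_length (by simpa using hlt.le), List.map_take]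
      have hsub : cluster (MoralGraph (addRootE E Z)) π' i ⊆
          insert (none : Option V) (some '' cluster (MoralGraph E) π j) := by
        intro y hy
        rcases hy with rfl | hy
        · rw [hget]
          exact Set.mem_insert_of_mem _ ⟨_, Set.mem_insert _ _, rfl⟩
        · rw [htake, hget] at hy
          cases y with
          | none => exact Set.mem_insert _ _
          | some b =>
            refine Set.mem_insert_of_mem _ ⟨b, Set.mem_insert_of_mem _ ?_, rfl⟩
            exact (elimList_some_iff (MoralGraph E) _ h0 (π.take i) _ _).mp hy
      calc (cluster (MoralGraph (addRootE E Z)) π' i).ncard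
          ≤ (insert (none : Option V) (some '' cluster (MoralGraph E) π j)).ncard :=
            Set.ncard_le_ncard hsub (Set.toFinite _)
        _ ≤ (some '' cluster (MoralGraph E) π j).ncard + 1 := Set.ncard_insert_le _ _
        _ = (cluster (MoralGraph E) π j).ncard + 1 := by
            rw [Set.ncard_image_of_injective _ (Option.some_injective V)]
        _ ≤ w + 2 := by have := hsupE j; omega
    · have hie : (i : ℕ) = π.length := by omega
      have hget : π'.get i = none := by
        simp only [hπ', List.get_eq_getElem]
        rw [List.getElem_append_right (by simpa using hie.ge)]
        simp [hie]
      have htake : π'.take i = π.map some := by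
        simp only [hπ', hie]
        rw [← List.length_map some, List.take_left]
      have hiso : (elimList (MoralGraph (addRootE E Z)) (π'.take i)).neighborSet
          (π'.get i) = ∅ := by
        rw [hget, htake]
        ext y
        simp only [SimpleGraph.mem_neighborSet, Set.mem_empty_iff_false, iff_false]
        intro hy
        cases y with
        | none => exact (elimList _ _).loopless.irrefl _ hy
        | some b =>
          exact mem_isolated_elimList _ (some b) _
            (List.mem_map_of_mem (f := some) (hπ.2 b)) none hy.symm
      have : cluster (MoralGraph (addRootE E Z)) π' i = {π'.get i} := by
        unfold cluster
        rw [hiso]; simp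
      rw [this]
      simp
  have hsup : (Finset.univ.sup fun i : Fin π'.length =>
      (cluster (MoralGraph (addRootE E Z)) π' i).ncard) ≤ w + 2 :=
    Finset.sup_le fun i _ => key i
  unfold orderWidth
  omega
end

section
/- Let G be a finite simple graph with n vertices and let G' be the graph obtained from G by adding one new vertex H adjacent to an arbitrary subset of the vertices of G. Fix an elimination order π = X_1, ..., X_n of the vertices of G and eliminate X_1, ..., X_n successively from both G and G'. Then for every i = 1, ..., n, the cluster C'_i induced in G' satisfies C'_i ⊆ C_i ∪ {H}, where C_i is the cluster induced in G. Consequently, every fill-in edge created in G' that is not created in G is incident on H. -/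
/-! Preliminaries: vertex elimination, elimination orders, clusters, width,
moral graphs of DAGs. -/

variable {V : Type*}

/-- Adding a new vertex (`none`) adjacent to the vertices in `Z`. -/
def addVertexGraph (G : SimpleGraph V) (Z : Set V) : SimpleGraph (Option V) where
  Adj x y :=
    (∃ a b, G.Adj a b ∧ x = some a ∧ y = some b) ∨
    (x = none ∧ ∃ b ∈ Z, y = some b) ∨
    (y = none ∧ ∃ a ∈ Z, x = some a)
  symm := by
    constructor
    rintro x y (⟨a, b, hab, rfl, rfl⟩ | ⟨rfl, b, hb, rfl⟩ | ⟨rfl, a, ha, rfl⟩)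
    · exact Or.inl ⟨b, a, hab.symm, rfl, rfl⟩
    · exact Or.inr (Or.inr ⟨rfl, b, hb, rfl⟩)
    · exact Or.inr (Or.inl ⟨rfl, a, ha, rfl⟩)
  loopless := by
    constructor
    rintro x (⟨a, b, hab, rfl, h⟩ | ⟨rfl, b, hb, h⟩ | ⟨h, a, ha, rfl⟩)
    · rw [Option.some_inj] at h; subst h; exact hab.ne rfl
    · exact absurd h (by simp)
    · exact absurd h (by simp)

/-- `(x, y)` is a fill-in edge created at step `i` of eliminating order `π` from `G`:
`x` and `y` are distinct neighbors of the `i`-th vertex that are not yet adjacent just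
before it is eliminated. -/
def FillIn (G : SimpleGraph V) (π : List V) (i : Fin π.length) (x y : V) : Prop :=
  x ≠ y ∧ (elimList G (π.take i)).Adj x (π.get i) ∧
    (elimList G (π.take i)).Adj y (π.get i) ∧ ¬ (elimList G (π.take i)).Adj x y

lemma elim_pres {V : Type*} (l : List V) (G : SimpleGraph V) (G' : SimpleGraph (Option V))
    (h : ∀ a b, G'.Adj (some a) (some b) ↔ G.Adj a b) :
    ∀ a b, (elimList G' (l.map some)).Adj (some a) (some b) ↔ (elimList G l).Adj a b := by
  induction l generalizing G G' with
  | nil => exact h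
  | cons v t ih =>
    intro a b
    have step : ∀ a b, (elimVertex G' (some v)).Adj (some a) (some b) ↔
        (elimVertex G v).Adj a b := by
      intro a b
      simp only [elimVertex, h, ne_eq, Option.some_inj]
    exact ih (elimVertex G v) (elimVertex G' (some v)) step a b

lemma addVertex_some {V : Type*} (G : SimpleGraph V) (Z : Set V) :
    ∀ a b, (addVertexGraph G Z).Adj (some a) (some b) ↔ G.Adj a b := by
  intro a b
  constructor
  · rintro (⟨c, d, hcd, hc, hd⟩ | ⟨h, -⟩ | ⟨h, -⟩)
    · rw [Option.some_inj] at hc hd; subst hc; subst hd; exact hcd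
    · exact absurd h (by simp)
    · exact absurd h (by simp)
  · intro h; exact Or.inl ⟨a, b, h, rfl, rfl⟩

lemma elim_addVertex {V : Type*} (G : SimpleGraph V) (Z : Set V) (l : List V) :
    ∀ a b, (elimList (addVertexGraph G Z) (l.map some)).Adj (some a) (some b) ↔
      (elimList G l).Adj a b :=
  elim_pres l G _ (addVertex_some G Z)

/-- Let `G` be a finite simple graph with vertices `V` and `G'` be
obtained from `G` by adding one new vertex `H` (here `none : Option V`) adjacent to an
arbitrary subset `Z` of the vertices of `G`. Fix an elimination order `π` of the
vertices of `G` and eliminate them successively from both `G` and `G'`. Then every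
cluster `C'ᵢ` induced in `G'` satisfies `C'ᵢ ⊆ Cᵢ ∪ {H}`, where `Cᵢ` is the cluster
induced in `G`. Consequently, every fill-in edge created in `G'` that is not created in
`G` is incident on `H`. -/
theorem stmt3 {V : Type*} [Fintype V] (G : SimpleGraph V) (Z : Set V)
    (π : List V) (hπ : IsElimOrder π) :
    (∀ i : Fin π.length,
      cluster (addVertexGraph G Z) (π.map some) ⟨i, by simpa using i.isLt⟩ ⊆
        insert none (some '' cluster G π i)) ∧
    (∀ (i : Fin (π.map some).length) (x y : Option V),
      FillIn (addVertexGraph G Z) (π.map some) i x y →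
      (¬ ∃ (j : Fin π.length) (a b : V), x = some a ∧ y = some b ∧ FillIn G π j a b) →
      x = none ∨ y = none) := by
  have htake : ∀ i : ℕ, (π.map some).take i = (π.take i).map some := by
    intro i; rw [List.map_take]
  have hget : ∀ (i : Fin π.length), (π.map some).get ⟨i, by simpa using i.isLt⟩
      = some (π.get i) := by
    intro i
    simp [List.get_eq_getElem]
  constructor
  · intro i x hx
    rw [cluster, Set.mem_insert_iff] at hx
    rcases hx with hx | hx
    · rw [hget i] at hx
      subst hx
      exact Or.inr ⟨π.get i, Set.mem_insert _ _, rfl⟩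
    · rw [SimpleGraph.mem_neighborSet, hget i, htake] at hx
      match x with
      | none => exact Or.inl rfl
      | some a =>
        refine Or.inr ⟨a, Set.mem_insert_iff.mpr (Or.inr ?_), rfl⟩
        exact (elim_addVertex G Z (π.take i) (π.get i) a).mp hx
  · intro i x y hf hnot
    match x, y with
    | none, _ => exact Or.inl rfl
    | _, none => exact Or.inr rfl
    | some a, some b =>
      exfalso
      apply hnot
      have hlen : (i : ℕ) < π.length := by simpa using i.isLt
      refine ⟨⟨i, hlen⟩, a, b, rfl, rfl, ?_⟩
      obtain ⟨hne, h1, h2, h3⟩ := hf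
      rw [htake] at h1 h2 h3
      rw [hget ⟨i, hlen⟩] at h1 h2
      refine ⟨fun h => hne (by rw [h]), ?_, ?_, ?_⟩
      · exact (elim_addVertex G Z (π.take i) a (π.get ⟨i, hlen⟩)).mp h1
      · exact (elim_addVertex G Z (π.take i) b (π.get ⟨i, hlen⟩)).mp h2
      · intro h
        exact h3 ((elim_addVertex G Z (π.take i) a b).mpr h)
end

section
/- Let G be a finite DAG, let U be a subset of its roots, and let G' be the DAG obtained from the 3n-world model of G sharing U by adding one new root vertex H as a parent of an arbitrary subset of the non-shared (duplicate) vertices. If π is an elimination order for G with width w (on the moral graph of G), then the elimination order π' for G' obtained by replacing each non-U vertex X in π by its 3n duplicates (consecutively) and appending H at the end of the order has width w' ≤ 3n(w + 1) (on the moral graph of G'). -/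
/-! Preliminaries: vertex elimination, elimination orders, clusters, width,
moral graphs of DAGs. -/

variable {V : Type*}

/-! The `n`-world model of a DAG sharing a set `U` of its roots. -/

/-- Vertices of the `n`-world model of a DAG on `V` sharing the roots `U`:
vertices in `U` are shared; every other vertex has `n` duplicates. -/
def WVertex (U : Set V) (n : ℕ) : Type _ := ↥U ⊕ (↥Uᶜ × Fin n)

/-- The copy of vertex `v` in world `k` (vertices in `U` are shared). -/
def worldCopy (U : Set V) [DecidablePred (· ∈ U)] (n : ℕ) (k : Fin n) (v : V) :
    WVertex U n :=
  if h : v ∈ U then Sum.inl ⟨v, h⟩ else Sum.inr (⟨v, h⟩, k)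

/-- Edge relation of the `n`-world model: each edge of the DAG is duplicated in each
copy. -/
def nWorldE (E : V → V → Prop) (U : Set V) [DecidablePred (· ∈ U)] (n : ℕ) :
    WVertex U n → WVertex U n → Prop :=
  fun a b => ∃ (x y : V) (k : Fin n),
    E x y ∧ a = worldCopy U n k x ∧ b = worldCopy U n k y

/-- The elimination order for the `n`-world model corresponding to an order `π`:
replace each non-`U` vertex by its `n` duplicates (consecutively). -/
def liftOrder (U : Set V) [DecidablePred (· ∈ U)] (n : ℕ) (π : List V) :
    List (WVertex U n) :=
  π.flatMap fun v =>
    if h : v ∈ U then [Sum.inl ⟨v, h⟩]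
    else (List.finRange n).map fun k => Sum.inr (⟨v, h⟩, k)

/-! ### Auxiliary development -/

section Aux
variable {V : Type*}

/-- Reachability through a set `S`: a walk whose internal vertices all lie in `S`. -/
inductive RT (A : V → V → Prop) (S : Set V) : V → V → Prop
  | base {x y} : A x y → RT A S x y
  | trans {x z y} : A x z → z ∈ S → RT A S z y → RT A S x y

theorem RT.mono {A : V → V → Prop} {S T : Set V} (hST : S ⊆ T) {x y : V}
    (h : RT A S x y) : RT A T x y := by
  induction h with
  | base h => exact .base h
  | trans h hz _ ih => exact .trans h (hST hz) ih

theorem RT.append {A : V → V → Prop} {S : Set V} {x z y : V} (h1 : RT A S x z)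
    (hz : z ∈ S) (h2 : RT A S z y) : RT A S x y := by
  induction h1 with
  | base h => exact .trans h hz h2
  | trans h hw _ ih => exact .trans h hw (ih hz h2)

theorem RT.symm {A : V → V → Prop} (hA : ∀ ⦃x y⦄, A x y → A y x) {S : Set V} {x y : V}
    (h : RT A S x y) : RT A S y x := by
  induction h with
  | base h => exact .base (hA h)
  | trans h hz _ ih => exact ih.append hz (.base (hA h))

theorem RT.split {A : V → V → Prop} {S : Set V} {v x y : V}
    (h : RT A (insert v S) x y) : x ≠ v →
    RT A S x y ∨ (RT A S x v ∧ RT A (insert v S) v y) := by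
  induction h with
  | base h => exact fun _ => Or.inl (.base h)
  | @trans x z y h hz htail ih =>
    intro hx
    by_cases hzv : z = v
    · subst hzv; exact Or.inr ⟨.base h, htail⟩
    · have hz' : z ∈ S := hz.resolve_left hzv
      rcases ih hzv with h1 | ⟨h1, h2⟩
      · exact Or.inl (.trans h hz' h1)
      · exact Or.inr ⟨.trans h hz' h1, h2⟩

theorem RT.split_target {A : V → V → Prop} {S : Set V} {v x : V}
    (h : RT A (insert v S) x v) (hx : x ≠ v) : RT A S x v :=
  (h.split hx).elim id And.left

theorem RT.split' {A : V → V → Prop} (hA : ∀ ⦃x y⦄, A x y → A y x) {S : Set V} {v x y : V}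
    (h : RT A (insert v S) x y) (hx : x ≠ v) (hy : y ≠ v) :
    RT A S x y ∨ (RT A S x v ∧ RT A S y v) := by
  rcases h.split hx with h1 | ⟨h1, h2⟩
  · exact Or.inl h1
  · exact Or.inr ⟨h1, (h2.symm hA).split_target hy⟩

theorem elimList_nil (G : SimpleGraph V) : elimList G [] = G := rfl

theorem elimList_concat (G : SimpleGraph V) (l : List V) (v : V) :
    elimList G (l ++ [v]) = elimVertex (elimList G l) v := by
  simp [elimList]

/-- Forward direction: adjacency after elimination yields a walk through eliminated
vertices. -/
theorem elim_adj_rt {G : SimpleGraph V} (l : List V) :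
    ∀ {x y}, (elimList G l).Adj x y →
      x ∉ l ∧ y ∉ l ∧ x ≠ y ∧ RT G.Adj {z | z ∈ l} x y := by
  induction l using List.reverseRecOn with
  | nil => exact fun h => ⟨by simp, by simp, h.ne, .base h⟩
  | append_singleton l v ih =>
    intro x y h
    rw [elimList_concat] at h
    obtain ⟨hxy, hxv, hyv, h⟩ := h
    have hset : {z | z ∈ l ++ [v]} = insert v {z | z ∈ l} := by
      ext z; simp [or_comm]
    rw [hset]
    rcases h with h | ⟨h1, h2⟩
    · obtain ⟨hx, hy, _, hrt⟩ := ih h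
      exact ⟨by simp [hx, hxv], by simp [hy, hyv], hxy,
        hrt.mono (Set.subset_insert _ _)⟩
    · obtain ⟨hx, -, -, hrt1⟩ := ih h1
      obtain ⟨hy, -, -, hrt2⟩ := ih h2
      refine ⟨by simp [hx, hxv], by simp [hy, hyv], hxy, ?_⟩
      exact (hrt1.mono (Set.subset_insert _ _)).append (Set.mem_insert _ _)
        (((hrt2.mono (Set.subset_insert _ _))).symm (fun _ _ h => h.symm))

/-- Backward direction (for duplicate-free lists). -/
theorem rt_elim_adj {G : SimpleGraph V} (l : List V) (hl : l.Nodup) :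
    ∀ {x y}, x ∉ l → y ∉ l → x ≠ y → RT G.Adj {z | z ∈ l} x y →
      (elimList G l).Adj x y := by
  induction l using List.reverseRecOn with
  | nil =>
    intro x y _ _ _ hrt
    induction hrt with
    | base h => exact h
    | trans _ hz _ _ => exact absurd hz (by simp)
  | append_singleton l v ih =>
    rw [List.nodup_append] at hl
    obtain ⟨hl, -, hvl⟩ := hl
    have hv : v ∉ l := fun hm => hvl v hm v (by simp) rfl
    intro x y hx hy hxy hrt
    have hset : {z | z ∈ l ++ [v]} = insert v {z | z ∈ l} := by
      ext z; simp [or_comm]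
    rw [hset] at hrt
    have hx' : x ∉ l := fun h => hx (by simp [h])
    have hy' : y ∉ l := fun h => hy (by simp [h])
    have hxv : x ≠ v := fun h => hx (by simp [h])
    have hyv : y ≠ v := fun h => hy (by simp [h])
    rw [elimList_concat]
    rcases hrt.split' (fun _ _ h => h.symm) hxv hyv with h1 | ⟨h1, h2⟩
    · exact ⟨hxy, hxv, hyv, Or.inl (ih hl hx' hy' hxy h1)⟩
    · exact ⟨hxy, hxv, hyv, Or.inr ⟨ih hl hx' hv hxv h1, ih hl hy' hv hyv h2⟩⟩

end Aux


section Model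
variable {V : Type*} {U : Set V} [DecidablePred (· ∈ U)] {m : ℕ} {E : V → V → Prop}

/-- Projection of a world-model vertex to its base vertex. -/
def pj (U : Set V) (m : ℕ) : WVertex U m → V
  | Sum.inl u => u.1
  | Sum.inr (x, _) => x.1

theorem pj_worldCopy (k : Fin m) (v : V) : pj U m (worldCopy U m k v) = v := by
  by_cases h : v ∈ U
  · rw [show worldCopy U m k v = Sum.inl ⟨v, h⟩ from dif_pos h]; rfl
  · rw [show worldCopy U m k v = Sum.inr (⟨v, h⟩, k) from dif_neg h]; rfl

theorem nWorldE_proj {a b : WVertex U m} (h : nWorldE E U m a b) :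
    E (pj U m a) (pj U m b) := by
  obtain ⟨x, y, k, hE, rfl, rfl⟩ := h
  rw [pj_worldCopy, pj_worldCopy]; exact hE

theorem addRootE_some_some {Z' : Set (WVertex U m)} {c d : WVertex U m}
    (h : addRootE (nWorldE E U m) Z' (some c) (some d)) : E (pj U m c) (pj U m d) := by
  rcases h with ⟨s, t, hst, hc, hd⟩ | ⟨hnone, -⟩
  · obtain rfl := Option.some.inj hc
    obtain rfl := Option.some.inj hd
    exact nWorldE_proj hst
  · exact absurd hnone (by simp)

theorem addRootE_to_none {Z' : Set (WVertex U m)} {c : Option (WVertex U m)}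
    (h : addRootE (nWorldE E U m) Z' c none) : False := by
  rcases h with ⟨s, t, -, -, hd⟩ | ⟨-, b, -, hd⟩ <;> exact absurd hd (by simp)

theorem moral_proj {Z' : Set (WVertex U m)} {a b : WVertex U m}
    (h : (MoralGraph (addRootE (nWorldE E U m) Z')).Adj (some a) (some b)) :
    pj U m a = pj U m b ∨ (MoralGraph E).Adj (pj U m a) (pj U m b) := by
  obtain ⟨hne, h⟩ := h
  by_cases heq : pj U m a = pj U m b
  · exact Or.inl heq
  · refine Or.inr ⟨heq, ?_⟩
    rcases h with h | h | ⟨z, hz1, hz2⟩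
    · exact Or.inl (addRootE_some_some h)
    · exact Or.inr (Or.inl (addRootE_some_some h))
    · cases z with
      | none => exact absurd hz1 (fun h => addRootE_to_none h)
      | some z' =>
        exact Or.inr (Or.inr ⟨pj U m z', addRootE_some_some hz1,
          addRootE_some_some hz2⟩)

theorem rt_proj {Z' : Set (WVertex U m)} {S : Set (Option (WVertex U m))}
    (hnone : none ∉ S) {oa ob : Option (WVertex U m)}
    (h : RT (MoralGraph (addRootE (nWorldE E U m) Z')).Adj S oa ob) :
    ∀ {a b : WVertex U m}, oa = some a → ob = some b →
      pj U m a = pj U m b ∨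
        RT (MoralGraph E).Adj (pj U m '' {c | some c ∈ S}) (pj U m a) (pj U m b) := by
  induction h with
  | base h =>
    rintro a b rfl rfl
    rcases moral_proj h with h | h
    · exact Or.inl h
    · exact Or.inr (.base h)
  | @trans x z y h hz htail ih =>
    rintro a b rfl rfl
    cases z with
    | none => exact absurd hz hnone
    | some z' =>
      have hzT : pj U m z' ∈ pj U m '' {c | some c ∈ S} := ⟨z', hz, rfl⟩
      rcases moral_proj h with he | hadj <;> rcases ih rfl rfl with he2 | hrt
      · exact Or.inl (he.trans he2)
      · exact Or.inr (by rw [he]; exact hrt)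
      · exact Or.inr (.base (he2 ▸ hadj))
      · exact Or.inr (.trans hadj hzT hrt)

theorem copy_mem_liftOrder {c : WVertex U m} {u : V} (hc : pj U m c = u)
    {l : List V} (hu : u ∈ l) : c ∈ liftOrder U m l := by
  rw [liftOrder, List.mem_flatMap]
  refine ⟨u, hu, ?_⟩
  cases c with
  | inl s =>
    have hsU : u ∈ U := hc ▸ s.2
    rw [dif_pos hsU]
    refine List.mem_singleton.mpr ?_
    exact congrArg Sum.inl (Subtype.ext hc)
  | inr p =>
    obtain ⟨x, k⟩ := p
    have hxU : u ∉ U := hc ▸ x.2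
    rw [dif_neg hxU]
    refine List.mem_map.mpr ?_
    exact ⟨k, List.mem_finRange k, congrArg (fun t => Sum.inr (t, k)) (Subtype.ext hc.symm)⟩

theorem pj_block {v : V} {c : WVertex U m}
    (hc : c ∈ if h : v ∈ U then [Sum.inl (⟨v, h⟩ : ↥U)]
        else (List.finRange m).map fun k => (Sum.inr (⟨v, h⟩, k) : WVertex U m)) :
    pj U m c = v := by
  split at hc
  · replace hc := List.mem_singleton.mp hc
    subst hc; rfl
  · replace hc := List.mem_map.mp hc
    obtain ⟨k, -, rfl⟩ := hc
    rfl

end Model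

theorem flatMap_decomp {α β : Type*} (f : α → List β) :
    ∀ (l : List α) (i : ℕ) (hi : i < (l.flatMap f).length),
      ∃ j, ∃ hj : j < l.length, ∃ i₂, ∃ hi₂ : i₂ < (f l[j]).length,
        (l.flatMap f)[i] = (f l[j])[i₂] ∧
        (l.flatMap f).take i = (l.take j).flatMap f ++ (f l[j]).take i₂ := by
  intro l
  induction l with
  | nil => intro i hi; simp at hi
  | cons a l ih =>
    intro i hi
    by_cases h : i < (f a).length
    · refine ⟨0, by simp, i, by simpa using h, ?_, ?_⟩
      · simp [List.getElem_append_left h]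
      · simp [List.take_append_of_le_length h.le]
    · push_neg at h
      have hi' : i - (f a).length < (l.flatMap f).length := by
        rw [List.flatMap_cons, List.length_append] at hi; omega
      obtain ⟨j, hj, i₂, hi₂, h1, h2⟩ := ih (i - (f a).length) hi'
      refine ⟨j + 1, by simpa using hj, i₂, hi₂, ?_, ?_⟩
      · simp only [List.flatMap_cons]
        rw [List.getElem_append_right h]
        exact h1
      · simp only [List.flatMap_cons, List.take_cons]
        rw [List.take_append, List.take_of_length_le h, h2]
        simp [List.take_succ_cons, List.flatMap_cons]

/-- Let `G` be a finite DAG (edge relation `E` on `V`), `U` a subset of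
its roots, and `G'` obtained from the `3n`-world model of `G` sharing `U` by adding one
new root vertex `H` (here `none`) as a parent of an arbitrary subset `Z'` of the
non-shared (duplicate) vertices. If `π` is an elimination order for `G` with width `w`
(on the moral graph of `G`), then the elimination order `π'` for `G'` obtained by
replacing each non-`U` vertex of `π` by its `3n` duplicates (consecutively) and appending
`H` at the end has width `w' ≤ 3n(w + 1)` (on the moral graph of `G'`). -/
theorem stmt5 {V : Type*} [Fintype V] (E : V → V → Prop)
    (hdag : IsAcyclicDigraph E)
    (U : Set V) [DecidablePred (· ∈ U)] (hU : ∀ u ∈ U, IsRoot E u)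
    (n : ℕ) (hn : 0 < n)
    (Z' : Set (WVertex U (3 * n)))
    (hZ' : ∀ z ∈ Z', ∃ (x : ↥Uᶜ) (k : Fin (3 * n)), z = Sum.inr (x, k))
    (π : List V) (hπ : IsElimOrder π) (w : ℕ)
    (hw : orderWidth (MoralGraph E) π = w) :
    orderWidth (MoralGraph (addRootE (nWorldE E U (3 * n)) Z'))
        ((liftOrder U (3 * n) π).map some ++ [none]) ≤ 3 * n * (w + 1) := by
  classical
  obtain ⟨hnd, hall⟩ := hπ
  have hm0 : 0 < 3 * n := by omega
  haveI : Finite (WVertex U (3 * n)) := by unfold WVertex; infer_instance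
  set M' := MoralGraph (addRootE (nWorldE E U (3 * n)) Z') with hM'def
  set L := liftOrder U (3 * n) π with hLdef
  rw [orderWidth, tsub_le_iff_right]
  refine Finset.sup_le fun i _ => ?_
  have hilen : (i : ℕ) < L.length + 1 := by
    have := i.2
    simpa using this
  by_cases hi : (i : ℕ) < L.length
  · -- main case: a duplicated vertex
    have hget : (L.map some ++ [none]).get i = some (L[(i : ℕ)]'hi) := by
      rw [List.get_eq_getElem, List.getElem_append_left (by simpa using hi),
        List.getElem_map]
    have htake : (L.map some ++ [none]).take (i : ℕ) = (L.take (i : ℕ)).map some := by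
      rw [List.take_append_of_le_length (by simpa using hi.le), List.map_take]
    set fbl : V → List (WVertex U (3 * n)) := fun v =>
      if h : v ∈ U then [Sum.inl (⟨v, h⟩ : ↥U)]
      else (List.finRange (3 * n)).map fun k => (Sum.inr (⟨v, h⟩, k) : WVertex U (3 * n))
      with hfbl
    obtain ⟨j, hj, i₂, hi₂, hgetL, htakeL⟩ :=
      flatMap_decomp fbl π (i : ℕ) (show (i : ℕ) < (π.flatMap fbl).length from hi)
    set v := π[j]'hj with hvdef
    have hgetL' : L[(i : ℕ)]'hi = (fbl v)[i₂]'hi₂ := hgetL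
    have htakeL' : L.take (i : ℕ) = liftOrder U (3 * n) (π.take j) ++ (fbl v).take i₂ :=
      htakeL
    have hpa : pj U (3 * n) (L[(i : ℕ)]'hi) = v := by
      rw [hgetL']
      exact pj_block (List.getElem_mem hi₂)
    set C : Set V := insert v ((elimList (MoralGraph E) (π.take j)).neighborSet v)
      with hCdef
    have hCclus : C = cluster (MoralGraph E) π ⟨j, hj⟩ := by
      simp [hCdef, cluster, List.get_eq_getElem, hvdef]
    have hC : C.ncard ≤ w + 1 := by
      have h1 : (cluster (MoralGraph E) π ⟨j, hj⟩).ncard ≤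
          Finset.univ.sup fun k : Fin π.length => (cluster (MoralGraph E) π k).ncard := by
        apply Finset.le_sup (f := fun k : Fin π.length => (cluster (MoralGraph E) π k).ncard)
          (Finset.mem_univ ⟨j, hj⟩)
      rw [orderWidth] at hw
      rw [hCclus]
      omega
    set D : Set (WVertex U (3 * n)) := pj U (3 * n) ⁻¹' C with hDdef
    have hvC : v ∈ C := Set.mem_insert _ _
    have hsub : cluster M' (L.map some ++ [none]) i ⊆ insert none (some '' D) := by
      intro b hb
      simp only [cluster, Set.mem_insert_iff, SimpleGraph.mem_neighborSet] at hb
      rcases hb with rfl | hb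
      · rw [hget]
        exact Or.inr ⟨_, by rw [hDdef, Set.mem_preimage, hpa]; exact hvC, rfl⟩
      · obtain ⟨-, hbnot, hne, hrt⟩ := elim_adj_rt _ hb
        cases b with
        | none => exact Set.mem_insert _ _
        | some b' =>
          rw [hget] at hrt
          have hnone : none ∉ {z | z ∈ (L.map some ++ [none]).take (i : ℕ)} := by
            rw [Set.mem_setOf_eq, htake]
            intro hmem
            obtain ⟨c, -, hc⟩ := List.mem_map.mp hmem
            exact absurd hc (by simp)
          rcases rt_proj hnone hrt rfl rfl with he | hrt'
          · exact Or.inr ⟨b', by rw [hDdef, Set.mem_preimage, ← he, hpa]; exact hvC, rfl⟩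
          · rw [hpa] at hrt'
            have hT : (pj U (3 * n) ''
                {c | some c ∈ {z | z ∈ (L.map some ++ [none]).take (i : ℕ)}}) ⊆
                insert v {u | u ∈ π.take j} := by
              rintro _ ⟨c, hc, rfl⟩
              rw [Set.mem_setOf_eq, Set.mem_setOf_eq, htake, List.mem_map] at hc
              obtain ⟨c', hc', hcc⟩ := hc
              obtain rfl : c' = c := Option.some.inj hcc
              rw [htakeL'] at hc'
              rcases List.mem_append.mp hc' with hc1 | hc2
              · obtain ⟨u, hu, hcu⟩ := List.mem_flatMap.mp hc1
                exact Set.mem_insert_of_mem _ (by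
                  rw [Set.mem_setOf_eq, pj_block hcu]; exact hu)
              · rw [pj_block (List.take_subset _ _ hc2)]
                exact Set.mem_insert _ _
            have hrt2 := hrt'.mono hT
            by_cases hbv : pj U (3 * n) b' = v
            · exact Or.inr ⟨b', by rw [hDdef, Set.mem_preimage, hbv]; exact hvC, rfl⟩
            · have hnd' : (π.take j).Nodup := hnd.sublist (List.take_sublist _ _)
              have hvnot : v ∉ π.take j := by
                intro hmem
                rw [List.mem_take_iff_getElem] at hmem
                obtain ⟨k, hk, hkv⟩ := hmem
                have hkj : k ≠ j := by omega
                exact hkj (List.Nodup.getElem_inj_iff hnd |>.mp (by rw [hkv]))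
              have hbnot' : pj U (3 * n) b' ∉ π.take j := by
                intro hmem
                refine hbnot ?_
                rw [htake]
                refine List.mem_map_of_mem ?_
                rw [htakeL']
                exact List.mem_append_left _ (copy_mem_liftOrder rfl hmem)
              have hsymmM : ∀ ⦃x y : V⦄, (MoralGraph E).Adj x y →
                  (MoralGraph E).Adj y x := fun _ _ h => h.symm
              have h1 : RT (MoralGraph E).Adj {u | u ∈ π.take j} v (pj U (3 * n) b') :=
                ((hrt2.symm hsymmM).split_target hbv).symm hsymmM
              have hadjbase : (elimList (MoralGraph E) (π.take j)).Adj v (pj U (3 * n) b') :=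
                rt_elim_adj _ hnd' hvnot hbnot' (fun h => hbv h.symm) h1
              exact Or.inr ⟨b', by
                rw [hDdef, Set.mem_preimage]
                exact Set.mem_insert_of_mem _ hadjbase, rfl⟩
    have hDle : D.ncard ≤ C.ncard * (3 * n) := by
      set g : WVertex U (3 * n) → V × Fin (3 * n) := fun c => match c with
        | Sum.inl u => (u.1, ⟨0, hm0⟩)
        | Sum.inr (x, k) => (x.1, k) with hg
      have hginj : Function.Injective g := by
        rintro (u1 | ⟨x1, k1⟩) (u2 | ⟨x2, k2⟩) h <;>
          simp only [hg, Prod.mk.injEq] at h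
        · exact congrArg Sum.inl (Subtype.ext h.1)
        · exact absurd (h.1 ▸ u1.2) x2.2
        · exact absurd (h.1 ▸ x1.2) (by simp [u2.2])
        · obtain ⟨h1, h2⟩ := h
          rw [Subtype.ext h1, h2]
      have hgfst : ∀ c : WVertex U (3 * n), (g c).1 = pj U (3 * n) c := by
        rintro (u | ⟨x, k⟩) <;> rfl
      have himg : g '' D ⊆ C ×ˢ (Set.univ : Set (Fin (3 * n))) := by
        rintro _ ⟨c, hc, rfl⟩
        exact ⟨by rw [hgfst]; exact hc, trivial⟩
      calc D.ncard = (g '' D).ncard := (Set.ncard_image_of_injective _ hginj).symm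
        _ ≤ (C ×ˢ (Set.univ : Set (Fin (3 * n)))).ncard :=
            Set.ncard_le_ncard himg (Set.toFinite _)
        _ = C.ncard * (3 * n) := by
            rw [← Nat.card_coe_set_eq, Nat.card_congr (Equiv.Set.prod _ _),
              Nat.card_prod, Nat.card_coe_set_eq, Nat.card_coe_set_eq,
              Set.ncard_univ, Nat.card_eq_fintype_card, Fintype.card_fin]
    calc (cluster M' (L.map some ++ [none]) i).ncard
        ≤ (insert none (some '' D)).ncard := Set.ncard_le_ncard hsub (Set.toFinite _)
      _ ≤ (some '' D).ncard + 1 := Set.ncard_insert_le _ _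
      _ = D.ncard + 1 :=
          congrArg (· + 1) (Set.ncard_image_of_injective _ (Option.some_injective _))
      _ ≤ 3 * n * (w + 1) + 1 := by
          have h2 : C.ncard * (3 * n) ≤ (w + 1) * (3 * n) := Nat.mul_le_mul_right _ hC
          have h3 := hDle.trans h2
          have h4 : (w + 1) * (3 * n) = 3 * n * (w + 1) := Nat.mul_comm _ _
          omega
  · -- last position: the added root `none`
    have hieq : (i : ℕ) = L.length := by omega
    have hget : (L.map some ++ [none]).get i = none := by
      rw [List.get_eq_getElem,
        List.getElem_append_right (by simpa using hieq.ge)]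
      simp [hieq]
    have htake : (L.map some ++ [none]).take (i : ℕ) = L.map some := by
      rw [hieq, show L.length = (L.map some).length by simp, List.take_left]
    have hsub : cluster M' (L.map some ++ [none]) i ⊆ {none} := by
      intro b hb
      simp only [cluster, Set.mem_insert_iff, SimpleGraph.mem_neighborSet] at hb
      rcases hb with rfl | hb
      · rw [hget]; rfl
      · obtain ⟨-, hbnot, hne, -⟩ := elim_adj_rt _ hb
        rw [hget] at hne
        cases b with
        | none => exact rfl
        | some b' =>
          exact absurd (by
            rw [htake]
            exact List.mem_map_of_mem
              (copy_mem_liftOrder rfl (hall (pj U (3 * n) b')))) hbnot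
    calc (cluster M' (L.map some ++ [none]) i).ncard
        ≤ ({none} : Set (Option (WVertex U (3 * n)))).ncard :=
          Set.ncard_le_ncard hsub (Set.finite_singleton _)
      _ = 1 := Set.ncard_singleton _
      _ ≤ 3 * n * (w + 1) + 1 := Nat.succ_le_succ (Nat.zero_le _)
end

section
/- Let G be a finite DAG, let U be a subset of its roots, and let G' be the n-world model of G sharing U. Let π be a U-constrained elimination order for G with width w (on the moral graph of G), and let π' be the corresponding U-constrained elimination order for G' obtained by replacing each non-U vertex X in π by its n duplicates X^1, ..., X^n (consecutively), so that the vertices of U still appear last. Then the width w' of π' (on the moral graph of G') satisfies w' = w. -/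
/-! Preliminaries: vertex elimination, elimination orders, clusters, width,
moral graphs of DAGs. -/

variable {V : Type*}

section Aux

variable {V : Type*} {U : Set V} [DecidablePred (· ∈ U)] {n : ℕ}

lemma worldCopy_of_mem {v : V} (h : v ∈ U) (k : Fin n) :
    worldCopy U n k v = Sum.inl ⟨v, h⟩ := dif_pos h

lemma worldCopy_of_not_mem {v : V} (h : v ∉ U) (k : Fin n) :
    worldCopy U n k v = Sum.inr (⟨v, h⟩, k) := dif_neg h

lemma worldCopy_inj {k k' : Fin n} {x y : V}
    (h : worldCopy U n k x = worldCopy U n k' y) : x = y := by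
  by_cases hx : x ∈ U <;> by_cases hy : y ∈ U <;>
    simp only [worldCopy_of_mem, worldCopy_of_not_mem, hx, hy, not_false_iff] at h
  · exact congrArg Subtype.val (Sum.inl.inj h)
  · exact (Sum.inl_ne_inr h).elim
  · exact (Sum.inr_ne_inl h).elim
  · exact congrArg Subtype.val (congrArg Prod.fst (Sum.inr.inj h))

lemma worldCopy_world {k k' : Fin n} {x y : V} (hx : x ∉ U)
    (h : worldCopy U n k x = worldCopy U n k' y) : k = k' := by
  have hxy := worldCopy_inj h
  subst hxy
  rw [worldCopy_of_not_mem hx, worldCopy_of_not_mem hx] at h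
  exact congrArg Prod.snd (Sum.inr.inj h)

/-- The "lift" of a family of graphs on `V` (one per world) to the world model. -/
def Mix (U : Set V) [DecidablePred (· ∈ U)] (n : ℕ) (Hf : Fin n → SimpleGraph V) :
    SimpleGraph (WVertex U n) where
  Adj a b := ∃ (x y : V) (k : Fin n),
    (Hf k).Adj x y ∧ a = worldCopy U n k x ∧ b = worldCopy U n k y
  symm := by
    constructor
    rintro a b ⟨x, y, k, h, ha, hb⟩
    exact ⟨y, x, k, h.symm, hb, ha⟩
  loopless := by
    constructor
    rintro a ⟨x, y, k, h, ha, hb⟩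
    exact h.ne (worldCopy_inj (ha.symm.trans hb))

lemma mix_adj {Hf : Fin n → SimpleGraph V} {a b : WVertex U n} :
    (Mix U n Hf).Adj a b ↔ ∃ (x y : V) (k : Fin n),
      (Hf k).Adj x y ∧ a = worldCopy U n k x ∧ b = worldCopy U n k y := Iff.rfl

end Aux
section Aux2

variable {V : Type*} {U : Set V} [DecidablePred (· ∈ U)] {n : ℕ}

/-- Adjacency to the copy of a non-`U` vertex lives in its own world. -/
lemma mix_adj_copy {Hf : Fin n → SimpleGraph V} {a : WVertex U n} {v : V}
    (hv : v ∉ U) (k : Fin n) :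
    (Mix U n Hf).Adj a (worldCopy U n k v) ↔
      ∃ x, (Hf k).Adj x v ∧ a = worldCopy U n k x := by
  constructor
  · rintro ⟨x, y, k', h, ha, hb⟩
    have hyv : y = v := worldCopy_inj hb.symm
    subst hyv
    have hk : k = k' := worldCopy_world hv hb
    subst hk
    exact ⟨x, h, ha⟩
  · rintro ⟨x, h, ha⟩
    exact ⟨x, v, k, h, ha, rfl⟩

/-- Vertices isolated in every world stay isolated: eliminating a vertex preserves
isolation, and the eliminated vertex becomes isolated. -/
lemma not_adj_elimVertex {H : SimpleGraph V} {x v : V}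
    (h : x = v ∨ ∀ y, ¬ H.Adj x y) (y : V) : ¬ (elimVertex H v).Adj x y := by
  rintro ⟨hxy, hxv, hyv, hadj⟩
  rcases h with rfl | h
  · exact hxv rfl
  · rcases hadj with h1 | ⟨h1, h2⟩
    · exact h y h1
    · exact h v h1


/-- The key step: eliminating the world-`k` copy of a non-`U` vertex from a mixed
lifted graph amounts to eliminating it in world `k`. -/
lemma elim_mix {Hf : Fin n → SimpleGraph V} {v : V} (hv : v ∉ U) (k : Fin n) :
    elimVertex (Mix U n Hf) (worldCopy U n k v)
      = Mix U n (Function.update Hf k (elimVertex (Hf k) v)) := by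
  ext a b
  constructor
  · rintro ⟨hab, hav, hbv, hadj | ⟨ha, hb⟩⟩
    · rcases hadj with ⟨x, y, k', h, ha, hb⟩
      by_cases hk : k' = k
      · subst hk
        refine ⟨x, y, k', ?_, ha, hb⟩
        rw [Function.update_self]
        refine ⟨h.ne, ?_, ?_, Or.inl h⟩
        · rintro rfl; exact hav ha
        · rintro rfl; exact hbv hb
      · exact ⟨x, y, k', by rw [Function.update_of_ne hk]; exact h, ha, hb⟩
    · rw [mix_adj_copy hv] at ha hb
      obtain ⟨x, hx, ha⟩ := ha
      obtain ⟨y, hy, hb⟩ := hb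
      refine ⟨x, y, k, ?_, ha, hb⟩
      rw [Function.update_self]
      refine ⟨?_, ?_, ?_, Or.inr ⟨hx, hy⟩⟩
      · rintro rfl; exact hab (ha.trans hb.symm)
      · rintro rfl; exact hav ha
      · rintro rfl; exact hbv hb
  · rintro ⟨x, y, k', h, ha, hb⟩
    by_cases hk : k' = k
    · subst hk
      rw [Function.update_self] at h
      obtain ⟨hxy, hxv, hyv, hadj⟩ := h
      refine ⟨?_, ?_, ?_, ?_⟩
      · rintro rfl; exact hxy (worldCopy_inj (ha.symm.trans hb))
      · rintro rfl; exact hxv (worldCopy_inj ha.symm)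
      · rintro rfl; exact hyv (worldCopy_inj hb.symm)
      · rcases hadj with h1 | ⟨h1, h2⟩
        · exact Or.inl ⟨x, y, k', h1, ha, hb⟩
        · exact Or.inr ⟨(mix_adj_copy hv k').mpr ⟨x, h1, ha⟩,
            (mix_adj_copy hv k').mpr ⟨y, h2, hb⟩⟩
    · rw [Function.update_of_ne hk] at h
      refine ⟨?_, ?_, ?_, Or.inl ⟨x, y, k', h, ha, hb⟩⟩
      · rintro rfl; exact h.ne (worldCopy_inj (ha.symm.trans hb))
      · rintro rfl
        exact hk (worldCopy_world hv ha).symm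
      · rintro rfl
        exact hk (worldCopy_world hv hb).symm

end Aux2
section Aux3

variable {V : Type*} {U : Set V} [DecidablePred (· ∈ U)] {n : ℕ}

lemma mix_adj_shared {Hf : Fin n → SimpleGraph V} {a : WVertex U n} {u : V} (hu : u ∈ U) :
    (Mix U n Hf).Adj a (Sum.inl ⟨u, hu⟩) ↔
      ∃ x k, (Hf k).Adj x u ∧ a = worldCopy U n k x := by
  constructor
  · rintro ⟨x, y, k, h, ha, hb⟩
    have : u = y := worldCopy_inj ((worldCopy_of_mem hu k).trans hb)
    subst this
    exact ⟨x, k, h, ha⟩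
  · rintro ⟨x, k, h, ha⟩
    exact ⟨x, u, k, h, ha, (worldCopy_of_mem hu k).symm⟩

/-- Eliminating a shared vertex when all non-`U` vertices are already isolated. -/
lemma elim_mix_shared {H : SimpleGraph V} {u : V} (hu : u ∈ U)
    (hiso : ∀ x, x ∉ U → ∀ y, ¬ H.Adj x y) :
    elimVertex (Mix U n (fun _ => H)) (Sum.inl ⟨u, hu⟩)
      = Mix U n (fun _ => elimVertex H u) := by
  ext a b
  constructor
  · rintro ⟨hab, hau, hbu, hadj | ⟨ha, hb⟩⟩
    · rcases hadj with ⟨x, y, k, h, ha, hb⟩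
      refine ⟨x, y, k, ⟨h.ne, ?_, ?_, Or.inl h⟩, ha, hb⟩
      · rintro rfl; exact hau (ha.trans (worldCopy_of_mem hu k))
      · rintro rfl; exact hbu (hb.trans (worldCopy_of_mem hu k))
    · rw [mix_adj_shared hu] at ha hb
      obtain ⟨x, k, hx, ha⟩ := ha
      obtain ⟨y, k', hy, hb⟩ := hb
      have hxU : x ∈ U := by
        by_contra hxU; exact hiso x hxU u hx
      have hyU : y ∈ U := by
        by_contra hyU; exact hiso y hyU u hy
      have ha' : a = worldCopy U n k' x := by
        rw [worldCopy_of_mem hxU] at ha ⊢; exact ha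
      refine ⟨x, y, k', ⟨?_, ?_, ?_, Or.inr ⟨hx, hy⟩⟩, ha', hb⟩
      · rintro rfl; exact hab (ha'.trans hb.symm)
      · rintro rfl; exact hau (ha.trans (worldCopy_of_mem hu k))
      · rintro rfl; exact hbu (hb.trans (worldCopy_of_mem hu k'))
  · rintro ⟨x, y, k, ⟨hxy, hxu, hyu, hadj⟩, ha, hb⟩
    refine ⟨?_, ?_, ?_, ?_⟩
    · rintro rfl; exact hxy (worldCopy_inj (ha.symm.trans hb))
    · rintro rfl
      exact hxu (worldCopy_inj ((worldCopy_of_mem hu k).trans ha).symm)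
    · rintro rfl
      exact hyu (worldCopy_inj ((worldCopy_of_mem hu k).trans hb).symm)
    · rcases hadj with h1 | ⟨h1, h2⟩
      · exact Or.inl ⟨x, y, k, h1, ha, hb⟩
      · exact Or.inr ⟨(mix_adj_shared hu).mpr ⟨x, k, h1, ha⟩,
          (mix_adj_shared hu).mpr ⟨y, k, h2, hb⟩⟩

/-- The cluster of a non-`U` copy is the copy of the original cluster. -/
lemma cluster_copy {Hf : Fin n → SimpleGraph V} {v : V} (hv : v ∉ U) (k : Fin n) :
    insert (worldCopy U n k v) ((Mix U n Hf).neighborSet (worldCopy U n k v))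
      = worldCopy U n k '' insert v ((Hf k).neighborSet v) := by
  ext a
  simp only [Set.mem_insert_iff, SimpleGraph.mem_neighborSet, Set.mem_image]
  constructor
  · rintro (rfl | h)
    · exact ⟨v, Or.inl rfl, rfl⟩
    · rw [SimpleGraph.adj_comm, mix_adj_copy hv] at h
      obtain ⟨x, hx, ha⟩ := h
      exact ⟨x, Or.inr hx.symm, ha.symm⟩
  · rintro ⟨x, rfl | hx, rfl⟩
    · exact Or.inl rfl
    · exact Or.inr (((Mix U n Hf).adj_comm _ _).mp
        ((mix_adj_copy hv k).mpr ⟨x, hx.symm, rfl⟩))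

/-- The cluster of a shared vertex (when non-`U` vertices are isolated). -/
lemma cluster_shared {H : SimpleGraph V} {u : V} (hu : u ∈ U)
    (hiso : ∀ x, x ∉ U → ∀ y, ¬ H.Adj x y) (k₀ : Fin n) :
    insert (Sum.inl ⟨u, hu⟩ : WVertex U n)
        ((Mix U n (fun _ => H)).neighborSet (Sum.inl ⟨u, hu⟩))
      = worldCopy U n k₀ '' insert u (H.neighborSet u) := by
  ext a
  simp only [Set.mem_insert_iff, SimpleGraph.mem_neighborSet, Set.mem_image]
  constructor
  · rintro (rfl | h)
    · exact ⟨u, Or.inl rfl, worldCopy_of_mem hu k₀⟩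
    · replace h := (mix_adj_shared hu).mp (((Mix U n fun _ => H).adj_comm _ _).mp h)
      obtain ⟨x, k, hx, rfl⟩ := h
      have hxU : x ∈ U := by
        by_contra hxU; exact hiso x hxU u hx
      refine ⟨x, Or.inr hx.symm, ?_⟩
      rw [worldCopy_of_mem hxU, worldCopy_of_mem hxU]
  · rintro ⟨x, rfl | hx, rfl⟩
    · exact Or.inl (worldCopy_of_mem hu k₀)
    · exact Or.inr (((Mix U n (fun _ => H)).adj_comm _ _).mp
        ((mix_adj_shared hu).mpr ⟨x, k₀, hx.symm, rfl⟩))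

/-- The moral graph of the `n`-world model is the lift of the moral graph. -/
lemma moral_nWorld (E : V → V → Prop) (hdag : IsAcyclicDigraph E)
    (hU : ∀ u ∈ U, IsRoot E u) :
    MoralGraph (nWorldE E U n) = Mix U n (fun _ => MoralGraph E) := by
  have hnU : ∀ {x z : V}, E x z → z ∉ U := by
    intro x z h hz
    exact hU z hz x h
  have hchild : ∀ {a c : WVertex U n}, nWorldE E U n a c →
      ∃ (x z : V) (k : Fin n) (hz : z ∉ U), E x z ∧ a = worldCopy U n k x ∧
        c = Sum.inr (⟨z, hz⟩, k) := by
    rintro a c ⟨x, z, k, h, ha, hc⟩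
    exact ⟨x, z, k, hnU h, h, ha, by rw [hc, worldCopy_of_not_mem (hnU h)]⟩
  ext a b
  constructor
  · rintro ⟨hab, he | he | ⟨c, hac, hbc⟩⟩
    · obtain ⟨x, y, k, h, ha, hb⟩ := he
      have hxy : x ≠ y := by
        rintro rfl; exact hdag x (Relation.TransGen.single h)
      exact ⟨x, y, k, ⟨hxy, Or.inl h⟩, ha, hb⟩
    · obtain ⟨y, x, k, h, hb, ha⟩ := he
      have hxy : x ≠ y := by
        rintro rfl; exact hdag x (Relation.TransGen.single h)
      exact ⟨x, y, k, ⟨hxy, Or.inr (Or.inl h)⟩, ha, hb⟩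
    · obtain ⟨x, z, k, hz, h, ha, hc⟩ := hchild hac
      obtain ⟨y, z', k', hz', h', hb, hc'⟩ := hchild hbc
      rw [hc] at hc'
      have hzz : z = z' := congrArg (Subtype.val ∘ Prod.fst) (Sum.inr.inj hc')
      have hkk : k = k' := congrArg Prod.snd (Sum.inr.inj hc')
      subst hzz; subst hkk
      have hxy : x ≠ y := by
        rintro rfl; exact hab (ha.trans hb.symm)
      exact ⟨x, y, k, ⟨hxy, Or.inr (Or.inr ⟨z, h, h'⟩)⟩, ha, hb⟩
  · rintro ⟨x, y, k, ⟨hxy, hadj⟩, ha, hb⟩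
    refine ⟨fun h => hxy (worldCopy_inj ((ha.symm.trans h).trans hb)), ?_⟩
    rcases hadj with h | h | ⟨z, h1, h2⟩
    · exact Or.inl ⟨x, y, k, h, ha, hb⟩
    · exact Or.inr (Or.inl ⟨y, x, k, h, hb, ha⟩)
    · exact Or.inr (Or.inr ⟨worldCopy U n k z, ⟨x, z, k, h1, ha, rfl⟩,
        ⟨y, z, k, h2, hb, rfl⟩⟩)

end Aux3
section Aux4

variable {α : Type*}

/-- The list of clusters of an elimination order, computed recursively. -/
def clustersL (H : SimpleGraph α) : List α → List (Set α)
  | [] => []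
  | v :: l => insert v (H.neighborSet v) :: clustersL (elimVertex H v) l

lemma cluster_succ (G : SimpleGraph α) (v : α) (l : List α) (i : Fin l.length) :
    cluster G (v :: l) i.succ = cluster (elimVertex G v) l i := by
  simp [cluster, elimList, List.get_cons_succ]

/-- The `sup` of cluster sizes equals the `foldr max` over the cluster list. -/
lemma sup_cluster_eq (G : SimpleGraph α) (l : List α) :
    (Finset.univ.sup fun i : Fin l.length => (cluster G l i).ncard)
      = ((clustersL G l).map Set.ncard).foldr max 0 := by
  induction l generalizing G with
  | nil => simp [clustersL]
  | cons v l ih =>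
    have key : (Finset.univ.sup fun i : Fin (l.length + 1) =>
        (cluster G (v :: l) i).ncard)
        = max (insert v (G.neighborSet v) : Set α).ncard
            (Finset.univ.sup fun i : Fin l.length =>
              (cluster (elimVertex G v) l i).ncard) := by
      rw [Fin.univ_succ, Finset.sup_cons, Finset.sup_map]
      congr 1
    have : (Finset.univ.sup fun i : Fin ((v :: l).length) =>
        (cluster G (v :: l) i).ncard)
        = Finset.univ.sup fun i : Fin (l.length + 1) => (cluster G (v :: l) i).ncard := rfl
    rw [this, key, ih]
    simp [clustersL]

end Aux4
section Aux5

variable {V : Type*} {U : Set V} [DecidablePred (· ∈ U)] {n : ℕ}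

lemma worldCopy_injective (k : Fin n) : Function.Injective (worldCopy U n k) :=
  fun _ _ h => worldCopy_inj h

lemma foldr_max_replicate {a b : ℕ} {m : ℕ} (hm : 0 < m) :
    (List.replicate m a).foldr max b = max a b := by
  induction m with
  | zero => exact absurd hm (lt_irrefl 0)
  | succ m ih =>
    rw [List.replicate_succ, List.foldr_cons]
    rcases Nat.eq_zero_or_pos m with rfl | hm'
    · simp
    · rw [ih hm', ← max_assoc, max_self]

/-- Eliminating a block of copies of a non-`U` vertex. -/
lemma block_clusters {v : V} (hv : v ∉ U) (H : SimpleGraph V)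
    (ks : List (Fin n)) (hnd : ks.Nodup) (Hf : Fin n → SimpleGraph V)
    (h1 : ∀ k ∈ ks, Hf k = H) (h2 : ∀ k, k ∉ ks → Hf k = elimVertex H v)
    (rest : List (WVertex U n)) :
    clustersL (Mix U n Hf) ((ks.map fun k => worldCopy U n k v) ++ rest)
      = (ks.map fun k => worldCopy U n k '' insert v (H.neighborSet v))
        ++ clustersL (Mix U n fun _ => elimVertex H v) rest := by
  induction ks generalizing Hf with
  | nil =>
    have : Hf = fun _ => elimVertex H v := funext fun k => h2 k List.not_mem_nil
    rw [this]
    simp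
  | cons k ks ih =>
    have hk : Hf k = H := h1 k (List.mem_cons_self)
    simp only [List.map_cons, List.cons_append, clustersL]
    congr 1
    · rw [cluster_copy hv k, hk]
    · rw [elim_mix hv k]
      have hnd' : ks.Nodup := (List.nodup_cons.mp hnd).2
      have hkk : k ∉ ks := (List.nodup_cons.mp hnd).1
      refine ih hnd' _ ?_ ?_
      · intro k' hk'
        have hne : k' ≠ k := by rintro rfl; exact hkk hk'
        rw [Function.update_of_ne hne, h1 k' (List.mem_cons_of_mem _ hk')]
      · intro k' hk'
        by_cases hke : k' = k
        · subst hke; rw [Function.update_self, hk]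
        · rw [Function.update_of_ne hke, h2 k' (by simp [hke, hk'])]

/-- The main induction: cluster sizes of the lifted order achieve the same maximum. -/
lemma main_clusters (hn : 0 < n) (H : SimpleGraph V) (l : List V)
    (hsplit : ∃ l₁ l₂, l = l₁ ++ l₂ ∧ (∀ v ∈ l₁, v ∉ U) ∧ (∀ v ∈ l₂, v ∈ U))
    (hiso : ∀ x, x ∉ U → x ∉ l → ∀ y, ¬ H.Adj x y) :
    ((clustersL (Mix U n fun _ => H) (liftOrder U n l)).map Set.ncard).foldr max 0
      = ((clustersL H l).map Set.ncard).foldr max 0 := by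
  induction l generalizing H with
  | nil => simp [liftOrder, clustersL]
  | cons v l ih =>
    obtain ⟨l₁, l₂, heq, h1, h2⟩ := hsplit
    have hlift : liftOrder U n (v :: l)
        = (if h : v ∈ U then ([Sum.inl ⟨v, h⟩] : List (WVertex U n))
            else (List.finRange n).map fun k => Sum.inr (⟨v, h⟩, k)) ++ liftOrder U n l :=
      List.flatMap_cons
    by_cases hvU : v ∈ U
    · -- shared vertex: all of `v :: l` is in `U`
      have hl1 : l₁ = [] := by
        cases l₁ with
        | nil => rfl
        | cons w t =>
          exfalso
          rw [List.cons_append] at heq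
          injection heq with hw _
          exact h1 w (List.mem_cons_self) (hw ▸ hvU)
      have hall : ∀ x ∈ v :: l, x ∈ U := by
        intro x hx
        apply h2
        rw [hl1, List.nil_append] at heq
        exact heq ▸ hx
      have hisoAll : ∀ x, x ∉ U → ∀ y, ¬ H.Adj x y := by
        intro x hx
        exact hiso x hx (fun hmem => hx (hall x hmem))
      set k₀ : Fin n := ⟨0, hn⟩
      rw [hlift, dif_pos hvU]
      show ((insert (Sum.inl ⟨v, hvU⟩) ((Mix U n fun _ => H).neighborSet (Sum.inl ⟨v, hvU⟩))
          :: clustersL (elimVertex (Mix U n fun _ => H) (Sum.inl ⟨v, hvU⟩))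
            (liftOrder U n l)).map Set.ncard).foldr max 0 = _
      rw [cluster_shared hvU hisoAll k₀, elim_mix_shared hvU hisoAll]
      show max ((worldCopy U n k₀ '' insert v (H.neighborSet v)).ncard) _ = _
      rw [Set.ncard_image_of_injective _ (worldCopy_injective k₀)]
      rw [ih (elimVertex H v) ⟨[], l, by simp, by simp, fun x hx => hall x (List.mem_cons_of_mem _ hx)⟩
        (fun x hx _ => not_adj_elimVertex (Or.inr (hisoAll x hx)))]
      rfl
    · -- non-shared vertex: eliminate the block of copies
      obtain ⟨t, rfl, hl, h1'⟩ : ∃ t, l₁ = v :: t ∧ l = t ++ l₂ ∧ ∀ x ∈ t, x ∉ U := by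
        cases l₁ with
        | nil =>
          exfalso
          exact hvU (h2 v (by rw [List.nil_append] at heq; exact heq ▸ List.mem_cons_self))
        | cons w t =>
          rw [List.cons_append] at heq
          injection heq with hw hl
          subst hw
          exact ⟨t, rfl, hl, fun x hx => h1 x (List.mem_cons_of_mem _ hx)⟩
      rw [hlift, dif_neg hvU]
      have hblock : List.map (β := WVertex U n) (fun k => Sum.inr (⟨v, hvU⟩, k)) (List.finRange n)
          = (List.finRange n).map fun k => worldCopy U n k v := by
        refine List.map_congr_left fun k _ => ?_
        rw [worldCopy_of_not_mem hvU]
      change List.foldr max 0 (List.map Set.ncard (clustersL (Mix U n fun _ => H)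
        (List.map (β := WVertex U n) (fun k => Sum.inr (⟨v, hvU⟩, k)) (List.finRange n)
          ++ liftOrder U n l))) = _
      rw [hblock, block_clusters hvU H (List.finRange n) (List.nodup_finRange n)
        (fun _ => H) (fun _ _ => rfl) (fun k hk => absurd (List.mem_finRange k) hk)]
      rw [List.map_append, List.foldr_append]
      have hmapn : ((List.finRange n).map fun k =>
          worldCopy U n k '' insert v (H.neighborSet v)).map Set.ncard
          = List.replicate n (insert v (H.neighborSet v)).ncard := by
        rw [List.map_map]
        have : (Set.ncard ∘ fun k : Fin n => worldCopy U n k '' insert v (H.neighborSet v))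
            = fun _ : Fin n => (insert v (H.neighborSet v)).ncard := by
          funext k
          exact Set.ncard_image_of_injective _ (worldCopy_injective k)
        rw [this, List.map_const', List.length_finRange]
      rw [hmapn, foldr_max_replicate hn]
      have hiso' : ∀ x, x ∉ U → x ∉ l → ∀ y, ¬ (elimVertex H v).Adj x y := by
        intro x hx hxl
        refine not_adj_elimVertex ?_
        by_cases hxv : x = v
        · exact Or.inl hxv
        · exact Or.inr (hiso x hx (by simp [hxv, hxl]))
      rw [ih (elimVertex H v) ⟨t, l₂, hl, h1', h2⟩ hiso']
      rfl

end Aux5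

/-- Let `G` be a finite DAG (edge relation `E` on `V`), `U` a subset of
its roots, and `G'` the `n`-world model of `G` sharing `U`. Let `π` be a `U`-constrained
elimination order for `G` with width `w` (on the moral graph of `G`), and let `π'` be
the corresponding `U`-constrained elimination order for `G'` obtained by replacing each
non-`U` vertex of `π` by its `n` duplicates (consecutively), so that the vertices of `U`
still appear last. Then the width `w'` of `π'` (on the moral graph of `G'`) satisfies
`w' = w`. -/
theorem stmt7 {V : Type*} [Fintype V] (E : V → V → Prop)
    (hdag : IsAcyclicDigraph E)
    (U : Set V) [DecidablePred (· ∈ U)] (hU : ∀ u ∈ U, IsRoot E u)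
    (n : ℕ) (hn : 0 < n)
    (π : List V) (hπ : IsElimOrder π) (hcon : IsUConstrained U π) (w : ℕ)
    (hw : orderWidth (MoralGraph E) π = w) :
    orderWidth (MoralGraph (nWorldE E U n)) (liftOrder U n π) = w := by
  subst hw
  unfold orderWidth
  congr 1
  rw [moral_nWorld E hdag hU, sup_cluster_eq, sup_cluster_eq]
  exact main_clusters hn (MoralGraph E) π hcon
    (fun x _ hx => (hx (hπ.2 x)).elim)
end

section
/- Let G1 be a finite simple graph, let U be a subset of its vertices, and let H be a vertex of G1 with H ∉ U. Let G2 be the graph obtained from G1 by eliminating, in any order, all vertices other than those in {H} ∪ U. Then for any vertex X ∈ U: X is adjacent to H in G2 if and only if there exists a path between X and H in G1 that does not pass through any vertex of U \ {X}. -/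
/-! Preliminaries: vertex elimination, elimination orders, clusters, width,
moral graphs of DAGs. -/

variable {V : Type*}

/-- From a walk in `elimVertex G v`, get a walk in `G` whose support only adds `v`. -/
lemma walk_of_elimVertex {G : SimpleGraph V} {v a b : V} (q : (elimVertex G v).Walk a b) :
    ∃ p : G.Walk a b, ∀ w ∈ p.support, w = v ∨ w ∈ q.support := by
  induction q with
  | nil => exact ⟨.nil, by simp⟩
  | @cons a c b h q' ih =>
    obtain ⟨p', hp'⟩ := ih
    obtain ⟨hne, hav, hcv, (h1 | ⟨h1, h2⟩)⟩ := h
    · refine ⟨.cons h1 p', ?_⟩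
      intro w hw
      rw [SimpleGraph.Walk.support_cons, List.mem_cons] at hw
      rcases hw with rfl | hw
      · right; simp [SimpleGraph.Walk.support_cons]
      · rcases hp' w hw with h | h
        · exact Or.inl h
        · right; exact List.mem_cons_of_mem _ h
    · refine ⟨.cons h1 (.cons h2.symm p'), ?_⟩
      intro w hw
      simp only [SimpleGraph.Walk.support_cons, List.mem_cons] at hw
      rcases hw with rfl | rfl | hw
      · right; simp [SimpleGraph.Walk.support_cons]
      · exact Or.inl rfl
      · rcases hp' w hw with h | h
        · exact Or.inl h
        · right; exact List.mem_cons_of_mem _ h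

/-- From a walk in `G` avoiding a set except possibly through `v`, get a walk in
`elimVertex G v`. -/
lemma walk_to_elimVertex {G : SimpleGraph V} {v : V} {S : Set V} (hvS : v ∉ S) {b : V}
    (hbv : b ≠ v) : ∀ (n : ℕ) (a : V) (p : G.Walk a b), p.length ≤ n → a ≠ v →
    (∀ w ∈ p.support, w ∈ insert v S) →
    ∃ q : (elimVertex G v).Walk a b, ∀ w ∈ q.support, w ∈ S := by
  intro n
  induction n with
  | zero =>
    intro a p hlen hav hsupp
    cases p with
    | nil =>
      refine ⟨.nil, ?_⟩
      intro w hw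
      simp only [SimpleGraph.Walk.support_nil, List.mem_singleton] at hw
      subst hw
      rcases hsupp w (by simp) with h | h
      · exact absurd h hav
      · exact h
    | cons h p' => simp at hlen
  | succ n ih =>
    intro a p hlen hav hsupp
    cases p with
    | nil =>
      refine ⟨.nil, ?_⟩
      intro w hw
      simp only [SimpleGraph.Walk.support_nil, List.mem_singleton] at hw
      subst hw
      rcases hsupp w (by simp) with h | h
      · exact absurd h hav
      · exact h
    | @cons _ c _ h p' =>
      by_cases hcv : c = v
      · subst hcv
        cases p' with
        | nil => exact absurd rfl hbv
        | @cons _ d _ h2 p'' =>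
          have hdv : d ≠ c := h2.ne'
          have hsupp'' : ∀ w ∈ p''.support, w ∈ insert c S := by
            intro w hw
            exact hsupp w (by simp [SimpleGraph.Walk.support_cons, hw])
          have hlen'' : p''.length ≤ n := by
            simp only [SimpleGraph.Walk.length_cons] at hlen; omega
          by_cases had : d = a
          · subst had
            exact ih _ p'' hlen'' hav hsupp''
          · obtain ⟨q', hq'⟩ := ih d p'' hlen'' hdv hsupp''
            refine ⟨.cons ⟨fun hh => had hh.symm, hav, hdv, Or.inr ⟨h, h2.symm⟩⟩ q', ?_⟩
            intro w hw
            have hw : w = a ∨ w ∈ q'.support := List.mem_cons.mp hw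
            rcases hw with rfl | hw
            · rcases hsupp w (by simp) with hh | hh
              · exact absurd hh hav
              · exact hh
            · exact hq' w hw
      · have hsupp' : ∀ w ∈ p'.support, w ∈ insert v S := by
          intro w hw
          exact hsupp w (by simp [SimpleGraph.Walk.support_cons, hw])
        have hlen' : p'.length ≤ n := by
          simp only [SimpleGraph.Walk.length_cons] at hlen; omega
        obtain ⟨q', hq'⟩ := ih c p' hlen' hcv hsupp'
        refine ⟨.cons ⟨h.ne, hav, hcv, Or.inl h⟩ q', ?_⟩
        intro w hw
        have hw : w = a ∨ w ∈ q'.support := List.mem_cons.mp hw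
        rcases hw with rfl | hw
        · rcases hsupp w (by simp) with hh | hh
          · exact absurd hh hav
          · exact hh
        · exact hq' w hw

/-- Key lemma: adjacency after eliminating the vertices of a list `l` is equivalent
to the existence of a connecting walk whose interior lies in `l`. -/
lemma elimList_adj_iff_walk (G : SimpleGraph V) :
    ∀ (l : List V), l.Nodup → ∀ x y : V, x ∉ l → y ∉ l → x ≠ y →
    ((elimList G l).Adj x y ↔
      ∃ p : G.Walk x y, ∀ w ∈ p.support, w = x ∨ w = y ∨ w ∈ l) := by
  intro l
  induction l generalizing G with
  | nil =>
    intro _ x y _ _ hxy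
    constructor
    · intro h
      exact ⟨.cons h .nil, fun w hw => by rcases List.mem_cons.mp hw with h | h; exact Or.inl h; exact Or.inr (Or.inl (List.mem_singleton.mp h))⟩
    · rintro ⟨p, hp⟩
      cases p with
      | nil => exact absurd rfl hxy
      | @cons _ c _ h p' =>
        have hc : c = x ∨ c = y ∨ c ∈ ([] : List V) :=
          hp c (by simp [SimpleGraph.Walk.support_cons])
        rcases hc with rfl | rfl | hc
        · exact absurd rfl h.ne
        · exact h
        · simp at hc
  | cons v l' ih =>
    intro hnd x y hx hy hxy
    have hvl' : v ∉ l' := (List.nodup_cons.mp hnd).1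
    have hnd' : l'.Nodup := (List.nodup_cons.mp hnd).2
    have hxv : x ≠ v := fun h => hx (h ▸ List.mem_cons_self (a := v) (l := l'))
    have hyv : y ≠ v := fun h => hy (h ▸ List.mem_cons_self (a := v) (l := l'))
    have hxl' : x ∉ l' := fun h => hx (List.mem_cons_of_mem _ h)
    have hyl' : y ∉ l' := fun h => hy (List.mem_cons_of_mem _ h)
    have heq : elimList G (v :: l') = elimList (elimVertex G v) l' := rfl
    rw [heq, ih (elimVertex G v) hnd' x y hxl' hyl' hxy]
    constructor
    · rintro ⟨q, hq⟩
      obtain ⟨p, hp⟩ := walk_of_elimVertex q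
      refine ⟨p, ?_⟩
      intro w hw
      rcases hp w hw with rfl | hw'
      · exact Or.inr (Or.inr (List.mem_cons_self))
      · rcases hq w hw' with h | h | h
        · exact Or.inl h
        · exact Or.inr (Or.inl h)
        · exact Or.inr (Or.inr (List.mem_cons_of_mem _ h))
    · rintro ⟨p, hp⟩
      have hvS : v ∉ {w : V | w = x ∨ w = y ∨ w ∈ l'} := by
        simp only [Set.mem_setOf_eq]
        push_neg
        exact ⟨fun h => hxv h.symm, fun h => hyv h.symm, hvl'⟩
      obtain ⟨q, hq⟩ := walk_to_elimVertex hvS hyv p.length x p le_rfl hxv (by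
        intro w hw
        rcases hp w hw with h | h | h
        · exact Or.inr (Or.inl h)
        · exact Or.inr (Or.inr (Or.inl h))
        · rw [List.mem_cons] at h
          rcases h with rfl | h
          · exact Or.inl rfl
          · exact Or.inr (Or.inr (Or.inr h)))
      exact ⟨q, fun w hw => hq w hw⟩

/-- Let `G1` be a finite simple graph, `U` a subset of its vertices,
and `H` a vertex with `H ∉ U`. Let `G2` be obtained from `G1` by eliminating, in any
order `l`, all vertices other than those in `{H} ∪ U`. Then for any `X ∈ U`: `X` is
adjacent to `H` in `G2` iff there is a path between `X` and `H` in `G1` that does not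
pass through any vertex of `U \ {X}`. -/
theorem stmt8 {V : Type*} [Fintype V] (G1 : SimpleGraph V)
    (U : Set V) (H : V) (hHU : H ∉ U)
    (l : List V) (hnd : l.Nodup) (hl : ∀ v : V, v ∈ l ↔ v ∉ insert H U)
    (X : V) (hX : X ∈ U) :
    (elimList G1 l).Adj X H ↔
      ∃ p : G1.Walk X H, p.IsPath ∧ ∀ v ∈ p.support, v ∉ U \ {X} := by
  classical
  have hXH : X ≠ H := fun h => hHU (h ▸ hX)
  have hXl : X ∉ l := fun h => (hl X).mp h (Set.mem_insert_of_mem _ hX)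
  have hHl : H ∉ l := fun h => (hl H).mp h (Set.mem_insert _ _)
  rw [elimList_adj_iff_walk G1 l hnd X H hXl hHl hXH]
  constructor
  · rintro ⟨p, hp⟩
    refine ⟨p.bypass, p.bypass_isPath, ?_⟩
    intro w hw
    have hw' := p.support_bypass_subset hw
    rcases hp w hw' with rfl | rfl | h
    · simp
    · exact fun hh => hHU hh.1
    · intro hh
      exact (hl w).mp h (Set.mem_insert_of_mem _ hh.1)
  · rintro ⟨p, _, hp⟩
    refine ⟨p, ?_⟩
    intro w hw
    by_cases hwX : w = X
    · exact Or.inl hwX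
    by_cases hwH : w = H
    · exact Or.inr (Or.inl hwH)
    refine Or.inr (Or.inr ((hl w).mpr ?_))
    intro hmem
    rcases Set.mem_insert_iff.mp hmem with h | h
    · exact hwH h
    · exact hp w hw ⟨h, hwX⟩
end

section
/- Let G be a finite DAG whose moral graph G' is connected, let U be a subset of the roots of G, and let S ⊆ U be such that for every two distinct vertices U1, U2 ∈ S there exists a path between U1 and U2 in G' that does not pass through any vertex of U \ {U1, U2}. Then every U-constrained elimination order π of G (width measured on G') has width w ≥ |S| − 1. -/
/-! Preliminaries: vertex elimination, elimination orders, clusters, width,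
moral graphs of DAGs. -/

variable {V : Type*}

/-- Eliminating a vertex `a` preserves walks between vertices distinct from `a`. -/
lemma elim_walk (G : SimpleGraph V) (a : V) :
    ∀ (n : ℕ) (u v : V) (p : G.Walk u v), p.length ≤ n → u ≠ a → v ≠ a →
      ∃ q : (elimVertex G a).Walk u v, ∀ x ∈ q.support, x ∈ p.support ∧ x ≠ a := by
  intro n
  induction n with
  | zero =>
    intro u v p hp hu hv
    cases p with
    | nil => exact ⟨SimpleGraph.Walk.nil, by simp [hu]⟩
    | cons h p' => simp at hp
  | succ n ih =>
    intro u v p hp hu hv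
    cases p with
    | nil => exact ⟨SimpleGraph.Walk.nil, by simp [hu]⟩
    | cons h p' =>
      rename_i b
      by_cases hb : b = a
      · subst hb
        cases p' with
        | nil => exact absurd rfl hv
        | cons h' p'' =>
          rename_i c
          have hca : c ≠ b := h'.ne'
          have hlen : p''.length ≤ n := by simp at hp; omega
          by_cases hc : c = u
          · subst hc
            obtain ⟨q, hq⟩ := ih c v p'' hlen hu hv
            exact ⟨q, fun x hx => ⟨by simp [(hq x hx).1], (hq x hx).2⟩⟩
          · have e : (elimVertex G b).Adj u c :=
              ⟨fun hh => hc hh.symm, hu, hca, Or.inr ⟨h, h'.symm⟩⟩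
            obtain ⟨q, hq⟩ := ih c v p'' hlen hca hv
            refine ⟨SimpleGraph.Walk.cons e q, ?_⟩
            intro x hx
            rcases List.mem_cons.mp hx with rfl | hx'
            · exact ⟨by simp, hu⟩
            · exact ⟨by simp [(hq x hx').1], (hq x hx').2⟩
      · have hlen : p'.length ≤ n := by simp at hp; omega
        obtain ⟨q, hq⟩ := ih b v p' hlen hb hv
        have e : (elimVertex G a).Adj u b := ⟨h.ne, hu, hb, Or.inl h⟩
        refine ⟨SimpleGraph.Walk.cons e q, ?_⟩
        intro x hx
        rcases List.mem_cons.mp hx with rfl | hx'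
        · exact ⟨by simp, hu⟩
        · exact ⟨by simp [(hq x hx').1], (hq x hx').2⟩

/-- After eliminating a list `l`, two surviving vertices joined by a walk whose
support lies in `{u, v} ∪ l` are adjacent. -/
lemma elimList_adj : ∀ (l : List V) (G : SimpleGraph V) (u v : V), u ≠ v → u ∉ l → v ∉ l →
    ∀ p : G.Walk u v, (∀ x ∈ p.support, x = u ∨ x = v ∨ x ∈ l) →
      (elimList G l).Adj u v := by
  intro l
  induction l with
  | nil =>
    intro G u v huv hu hv p hsup
    cases p with
    | nil => exact absurd rfl huv
    | cons h p' =>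
      rename_i b
      rcases hsup b (by simp) with h1 | h2 | h3
      · exact absurd h1.symm h.ne
      · subst h2; exact h
      · simp at h3
  | cons a l' ih =>
    intro G u v huv hu hv p hsup
    have hua : u ≠ a := fun h => hu (h ▸ (List.mem_cons_self : a ∈ a :: l'))
    have hva : v ≠ a := fun h => hv (h ▸ (List.mem_cons_self : a ∈ a :: l'))
    obtain ⟨q, hq⟩ := elim_walk G a p.length u v p le_rfl hua hva
    have key : (elimList (elimVertex G a) l').Adj u v := by
      apply ih _ u v huv (fun h => hu (List.mem_cons_of_mem _ h))
        (fun h => hv (List.mem_cons_of_mem _ h)) q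
      intro x hx
      obtain ⟨hx1, hx2⟩ := hq x hx
      rcases hsup x hx1 with h1 | h2 | h3
      · exact Or.inl h1
      · exact Or.inr (Or.inl h2)
      · refine Or.inr (Or.inr ?_)
        rcases List.mem_cons.mp h3 with rfl | h4
        · exact absurd rfl hx2
        · exact h4
    exact key

/-- Let `G` be a finite DAG (edge relation `E` on `V`) whose moral
graph `G'` is connected, `U` a subset of the roots of `G`, and `S ⊆ U` such that for
every two distinct vertices `U1, U2 ∈ S` there exists a path between `U1` and `U2` in
`G'` that does not pass through any vertex of `U \ {U1, U2}`. Then every `U`-constrained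
elimination order `π` of `G` (width measured on `G'`) has width `w ≥ |S| − 1`. -/
theorem stmt12 {V : Type*} [Fintype V] (E : V → V → Prop)
    (hdag : IsAcyclicDigraph E) (hconn : (MoralGraph E).Connected)
    (U S : Set V) (hU : ∀ u ∈ U, IsRoot E u) (hSU : S ⊆ U)
    (hS : ∀ u₁ ∈ S, ∀ u₂ ∈ S, u₁ ≠ u₂ →
      ∃ p : (MoralGraph E).Walk u₁ u₂, p.IsPath ∧
        ∀ v ∈ p.support, v ∉ U \ {u₁, u₂})
    (π : List V) (hπ : IsElimOrder π) (hcon : IsUConstrained U π) :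
    S.ncard - 1 ≤ orderWidth (MoralGraph E) π := by
  classical
  rcases S.eq_empty_or_nonempty with rfl | hSne
  · simp
  obtain ⟨l₁, l₂, hpi, hl₁, hl₂⟩ := hcon
  obtain ⟨s₀, hs₀⟩ := hSne
  have hex : ∃ j, ∃ h : j < π.length, π.get ⟨j, h⟩ ∈ S := by
    obtain ⟨j, hj⟩ := List.get_of_mem (hπ.2 s₀)
    exact ⟨j, j.isLt, by rw [hj]; exact hs₀⟩
  set i := Nat.find hex with hidef
  obtain ⟨hi, hiS⟩ := Nat.find_spec hex
  set s := π.get ⟨i, hi⟩ with hsdef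
  -- no element of S lies in the prefix `π.take i`
  have htake : ∀ x ∈ π.take i, x ∉ S := by
    intro x hx hxS
    obtain ⟨j, hj, hjx⟩ := List.getElem_of_mem hx
    have hj1 : j < i := lt_of_lt_of_le hj (by simp [List.length_take])
    have hj2 : j < π.length := lt_of_lt_of_le hj (by simp [List.length_take])
    rw [List.getElem_take] at hjx
    exact Nat.find_min hex hj1 ⟨hj2, by simpa [hjx] using hxS⟩
  -- `l₁.length ≤ i`
  have hil : l₁.length ≤ i := by
    by_contra hlt
    push_neg at hlt
    have hi1 : i < l₁.length := hlt
    have : π.get ⟨i, hi⟩ ∈ l₁ := by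
      have : π.get ⟨i, hi⟩ = l₁[i]'hi1 := by
        simp only [List.get_eq_getElem, hpi]
        exact List.getElem_append_left hi1
      rw [this]; exact List.getElem_mem _
    exact hl₁ _ this (hSU hiS)
  -- every non-`U` vertex lies in `π.take i`
  have hUc : ∀ x : V, x ∉ U → x ∈ π.take i := by
    intro x hx
    have hxl₁ : x ∈ l₁ := by
      rcases List.mem_append.mp (hpi ▸ hπ.2 x) with h | h
      · exact h
      · exact absurd (hl₂ x h) hx
    have h1 : l₁ = π.take l₁.length := by rw [hpi, List.take_left]
    exact (List.take_prefix_take_left hil : π.take l₁.length <+: π.take i).subset (h1 ▸ hxl₁)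
  -- S is contained in the i-th cluster
  have hclu : S ⊆ cluster (MoralGraph E) π ⟨i, hi⟩ := by
    intro s' hs'
    by_cases hss : s' = s
    · subst hss; exact Set.mem_insert _ _
    · have hs'not : s' ∉ π.take i := fun h => htake s' h hs'
      have hsnot' : s ∉ π.take i := fun h => htake s h hiS
      obtain ⟨p, hpath, hpsup⟩ := hS s' hs' s hiS hss
      have hadj : (elimList (MoralGraph E) (π.take i)).Adj s' s := by
        apply elimList_adj _ _ _ _ hss hs'not hsnot' p
        intro x hx
        by_cases hxU : x ∈ U
        · have := hpsup x hx
          simp only [Set.mem_diff, Set.mem_insert_iff, Set.mem_singleton_iff] at this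
          push_neg at this
          rcases this hxU with h | h
          · exact Or.inl h
          · exact Or.inr (Or.inl h)
        · exact Or.inr (Or.inr (hUc x hxU))
      exact Set.mem_insert_iff.mpr (Or.inr hadj.symm)
  have h1 : S.ncard ≤ (cluster (MoralGraph E) π ⟨i, hi⟩).ncard :=
    Set.ncard_le_ncard hclu (Set.toFinite _)
  have h2 : (cluster (MoralGraph E) π ⟨i, hi⟩).ncard ≤
      Finset.univ.sup fun j : Fin π.length => (cluster (MoralGraph E) π j).ncard :=
    Finset.le_sup (f := fun j : Fin π.length => (cluster (MoralGraph E) π j).ncard)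
      (Finset.mem_univ (⟨i, hi⟩ : Fin π.length))
  unfold orderWidth
  omega
end

section
/- Let G be a finite connected DAG with at least two vertices and let U be a subset of its roots that is external to G, meaning that the moral graph of G remains connected after removing the vertices of U and all edges incident on them, and that G has at least one vertex outside U. Then every U-constrained elimination order of G (width measured on the moral graph) has width w ≥ |U| − 1. -/
/-! Preliminaries: vertex elimination, elimination orders, clusters, width,
moral graphs of DAGs. -/

variable {V : Type*}

/-- Restricted adjacency within a set. -/
def RAdjX (H : SimpleGraph V) (S : Set V) (x y : V) : Prop :=
  H.Adj x y ∧ x ∈ S ∧ y ∈ S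

lemma walk_to_rtgX (G : SimpleGraph V) (S : Set V) :
    ∀ {a b : S}, (G.induce S).Walk a b →
      Relation.ReflTransGen (RAdjX G S) a b := by
  intro a b w
  induction w with
  | nil => exact .refl
  | @cons a c b h _ ih => exact .head ⟨h, a.2, c.2⟩ ih

lemma rtg_elimX (H : SimpleGraph V) (S : Set V) (v : V) {x y : V}
    (hxy : Relation.ReflTransGen (RAdjX H S) x y) (hy : y ≠ v) :
    (x ≠ v → Relation.ReflTransGen (RAdjX (elimVertex H v) (S \ {v})) x y) ∧
    (x = v → ∀ a, H.Adj a v → a ∈ S \ {v} →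
      Relation.ReflTransGen (RAdjX (elimVertex H v) (S \ {v})) a y) := by
  induction hxy using Relation.ReflTransGen.head_induction_on with
  | refl => exact ⟨fun _ => .refl, fun h => absurd h hy⟩
  | @head x c hxc hcy ih =>
    obtain ⟨hadj, hxS, hcS⟩ := hxc
    constructor
    · intro hxv
      by_cases hcv : c = v
      · subst hcv
        exact ih.2 rfl x hadj ⟨hxS, hxv⟩
      · exact .head ⟨⟨hadj.ne, hxv, hcv, Or.inl hadj⟩, ⟨hxS, hxv⟩, ⟨hcS, hcv⟩⟩ (ih.1 hcv)
    · intro hxv a ha hamem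
      have hadj' : H.Adj v c := hxv ▸ hadj
      have hcv : c ≠ v := hadj'.ne.symm
      by_cases hac : a = c
      · exact hac ▸ ih.1 hcv
      · exact .head ⟨⟨hac, hamem.2, hcv, Or.inr ⟨ha, hadj'.symm⟩⟩, hamem, ⟨hcS, hcv⟩⟩
          (ih.1 hcv)

lemma clique_after_elimX (U : Set V) :
    ∀ (l : List V) (H : SimpleGraph V), l ≠ [] → l.Nodup →
    (∀ v ∈ l, v ∉ U) →
    (∀ x ∈ {x | x ∈ l}, ∀ y ∈ {x | x ∈ l},
      Relation.ReflTransGen (RAdjX H {x | x ∈ l}) x y) →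
    (∀ u ∈ U, ∃ w ∈ l, H.Adj u w) →
    ∀ u ∈ U, ∀ u' ∈ U, u ≠ u' → (elimList H l).Adj u u' := by
  intro l
  induction l with
  | nil => intro H h; exact absurd rfl h
  | cons v t ih =>
    intro H _ hnd hdisj hconn hnbr u hu u' hu' huu
    have hvt : v ∉ t := (List.nodup_cons.mp hnd).1
    have huv : u ≠ v := fun h => hdisj v List.mem_cons_self (h ▸ hu)
    have hu'v : u' ≠ v := fun h => hdisj v List.mem_cons_self (h ▸ hu')
    by_cases ht : t = []
    · subst ht
      have hv : ∀ w ∈ U, H.Adj w v := by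
        intro w hw
        obtain ⟨z, hz, hadj⟩ := hnbr w hw
        simp only [List.mem_singleton] at hz
        exact hz ▸ hadj
      show (elimVertex H v).Adj u u'
      exact ⟨huu, huv, hu'v, Or.inr ⟨hv u hu, hv u' hu'⟩⟩
    · have hSeq : ({x | x ∈ t} : Set V) = {x | x ∈ v :: t} \ {v} := by
        ext x
        simp only [Set.mem_setOf_eq, Set.mem_diff, Set.mem_singleton_iff, List.mem_cons]
        constructor
        · intro hx; exact ⟨Or.inr hx, fun h => hvt (h ▸ hx)⟩
        · rintro ⟨h | h, hne⟩
          · exact absurd h hne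
          · exact h
      have hconn' : ∀ x ∈ {x | x ∈ t}, ∀ y ∈ {x | x ∈ t},
          Relation.ReflTransGen (RAdjX (elimVertex H v) {x | x ∈ t}) x y := by
        intro x hx y hy
        rw [hSeq]
        exact (rtg_elimX H _ v
          (hconn x (List.mem_cons_of_mem _ hx) y (List.mem_cons_of_mem _ hy))
          (fun h => hvt (h ▸ hy))).1 (fun h => hvt (h ▸ hx))
      have hnbr' : ∀ w ∈ U, ∃ z ∈ t, (elimVertex H v).Adj w z := by
        intro w hw
        have hwv : w ≠ v := fun h => hdisj v List.mem_cons_self (h ▸ hw)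
        obtain ⟨z, hz, hadj⟩ := hnbr w hw
        by_cases hzv : z = v
        · have hadjv : H.Adj w v := hzv ▸ hadj
          obtain ⟨z₀, hz₀⟩ := List.exists_mem_of_ne_nil t ht
          have hrtg := hconn v List.mem_cons_self z₀ (List.mem_cons_of_mem _ hz₀)
          rcases hrtg.cases_head with heq | ⟨c, ⟨hvc, _, hcS⟩, _⟩
          · exact absurd heq (fun h => hvt (h ▸ hz₀))
          · have hcv : c ≠ v := hvc.ne.symm
            have hct : c ∈ t := by
              rcases List.mem_cons.mp hcS with h | h
              · exact absurd h hcv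
              · exact h
            refine ⟨c, hct, ⟨?_, hwv, hcv, Or.inr ⟨hadjv, hvc.symm⟩⟩⟩
            exact fun h => hdisj c (List.mem_cons_of_mem _ hct) (h ▸ hw)
        · have hzt : z ∈ t := by
            rcases List.mem_cons.mp hz with h | h
            · exact absurd h hzv
            · exact h
          exact ⟨z, hzt, ⟨hadj.ne, hwv, hzv, Or.inl hadj⟩⟩
      exact ih (elimVertex H v) ht (List.nodup_cons.mp hnd).2
        (fun x hx => hdisj x (List.mem_cons_of_mem _ hx)) hconn' hnbr' u hu u' hu' huu

lemma root_nbrX {V : Type*} [Fintype V] (E : V → V → Prop)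
    (hdag : IsAcyclicDigraph E) (hcard : 1 < Fintype.card V)
    (hconn : (MoralGraph E).Connected) (U : Set V) (hU : ∀ u ∈ U, IsRoot E u) :
    ∀ u ∈ U, ∃ w, w ∉ U ∧ (MoralGraph E).Adj u w := by
  intro u hu
  obtain ⟨w, hw⟩ := Fintype.exists_ne_of_one_lt_card hcard u
  obtain ⟨p⟩ := hconn u w
  have hy : ∃ y, (MoralGraph E).Adj u y := by
    cases p with
    | nil => exact absurd rfl hw
    | cons h _ => exact ⟨_, h⟩
  obtain ⟨y, hne, hy⟩ := hy
  by_cases hyU : y ∈ U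
  · rcases hy with h | h | ⟨z, huz, hyz⟩
    · exact absurd h (hU y hyU u)
    · exact absurd h (hU u hu y)
    · refine ⟨z, fun hz => hU z hz u huz, ⟨fun h => hdag u ?_, Or.inl huz⟩⟩
      exact Relation.TransGen.single (h ▸ huz : E u u)
  · exact ⟨y, hyU, hne, hy⟩

/-- Let `G` be a finite connected DAG (edge relation `E` on `V`) with
at least two vertices and `U` a subset of its roots that is external to `G`: the moral
graph of `G` remains connected after removing the vertices of `U` and all edges incident
on them, and `G` has at least one vertex outside `U`. Then every `U`-constrained
elimination order of `G` (width measured on the moral graph) has width `w ≥ |U| − 1`. -/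
theorem stmt13 {V : Type*} [Fintype V] (E : V → V → Prop)
    (hdag : IsAcyclicDigraph E) (hcard : 1 < Fintype.card V)
    (hconn : (MoralGraph E).Connected)
    (U : Set V) (hU : ∀ u ∈ U, IsRoot E u)
    (hext : ((MoralGraph E).induce Uᶜ).Connected)
    (hout : ∃ v : V, v ∉ U)
    (π : List V) (hπ : IsElimOrder π) (hcon : IsUConstrained U π) :
    U.ncard - 1 ≤ orderWidth (MoralGraph E) π := by
  rcases le_or_gt U.ncard 1 with h1 | h1
  · have : U.ncard - 1 = 0 := by omega
    rw [this]; exact Nat.zero_le _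
  · obtain ⟨hnd, hall⟩ := hπ
    obtain ⟨l₁, l₂, hπeq, hl₁, hl₂⟩ := hcon
    have hmem1 : ∀ x : V, x ∉ U → x ∈ l₁ := by
      intro x hx
      rcases List.mem_append.mp (hπeq ▸ hall x) with h | h
      · exact h
      · exact absurd (hl₂ x h) hx
    have hSeq : ({x | x ∈ l₁} : Set V) = Uᶜ := by
      ext x
      exact ⟨fun hx => hl₁ x hx, fun hx => hmem1 x hx⟩
    have hUne : U.Nonempty := Set.nonempty_of_ncard_ne_zero (by omega)
    obtain ⟨u₀, hu₀⟩ := hUne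
    have hu₀l₂ : u₀ ∈ l₂ := by
      rcases List.mem_append.mp (hπeq ▸ hall u₀) with h | h
      · exact absurd hu₀ (hl₁ u₀ h)
      · exact h
    obtain ⟨v₀, t, rfl⟩ : ∃ v₀ t, l₂ = v₀ :: t := by
      cases l₂ with
      | nil => exact absurd hu₀l₂ (List.not_mem_nil (a := u₀))
      | cons a b => exact ⟨a, b, rfl⟩
    have hv₀U : v₀ ∈ U := hl₂ v₀ List.mem_cons_self
    have hilt : l₁.length < π.length := by
      rw [hπeq, List.length_append, List.length_cons]; omega
    set i : Fin π.length := ⟨l₁.length, hilt⟩ with hi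
    have hget : π.get i = v₀ := by
      simp only [hi, List.get_eq_getElem, hπeq]
      rw [List.getElem_append_right (le_refl l₁.length)]
      simp
    have htake : π.take i = l₁ := by
      simp only [hi, hπeq]
      exact List.take_left (l₁ := l₁)
    have hclique : ∀ u' ∈ U, u' ≠ v₀ → (elimList (MoralGraph E) l₁).Adj v₀ u' := by
      intro u' hu' hne
      have hl₁ne : l₁ ≠ [] := by
        obtain ⟨v, hv⟩ := hout
        exact List.ne_nil_of_mem (hmem1 v hv)
      have hndl₁ : l₁.Nodup := ((List.nodup_append.mp (hπeq ▸ hnd)).1)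
      have hconn' : ∀ x ∈ {x | x ∈ l₁}, ∀ y ∈ {x | x ∈ l₁},
          Relation.ReflTransGen (RAdjX (MoralGraph E) {x | x ∈ l₁}) x y := by
        rw [hSeq]
        intro x hx y hy
        obtain ⟨w⟩ := hext.preconnected ⟨x, hx⟩ ⟨y, hy⟩
        exact walk_to_rtgX (MoralGraph E) Uᶜ w
      have hnbr : ∀ u ∈ U, ∃ w ∈ l₁, (MoralGraph E).Adj u w := by
        intro u hu
        obtain ⟨w, hwU, hadj⟩ := root_nbrX E hdag hcard hconn U hU u hu
        exact ⟨w, hmem1 w hwU, hadj⟩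
      exact clique_after_elimX U l₁ (MoralGraph E) hl₁ne hndl₁ hl₁ hconn' hnbr
        v₀ hv₀U u' hu' (Ne.symm hne)
    have hsub : U ⊆ cluster (MoralGraph E) π i := by
      intro u' hu'
      rw [cluster, hget, htake]
      by_cases h : u' = v₀
      · exact h ▸ Set.mem_insert _ _
      · exact Set.mem_insert_of_mem _ (hclique u' hu' h)
    have hle : U.ncard ≤ (cluster (MoralGraph E) π i).ncard :=
      Set.ncard_le_ncard hsub (Set.toFinite _)
    have hsup : (cluster (MoralGraph E) π i).ncard ≤
        Finset.univ.sup fun j : Fin π.length => (cluster (MoralGraph E) π j).ncard :=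
      Finset.le_sup (f := fun j : Fin π.length => (cluster (MoralGraph E) π j).ncard) (Finset.mem_univ i)
    exact Nat.sub_le_sub_right (le_trans hle hsup) 1
end

section
/- Let G' be a finite DAG, let H be a root vertex of G' having exactly one child, and let U be a set of vertices of G' with H ∉ U and such that U contains no descendant relation with H's child belonging to U (i.e., H's child is not in U). Let G2 be the graph obtained from the moral graph of G' by eliminating, in any order, all vertices other than those in U ∪ {H}. Then the set of neighbors of H in G2 forms a clique in G2; consequently, eliminating H from G2 adds no fill-in edges. -/
/-! Preliminaries: vertex elimination, elimination orders, clusters, width,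
moral graphs of DAGs. -/

variable {V : Type*}

lemma aux_clique_elim {V : Type*} {G : SimpleGraph V} {H v : V}
    (h : G.IsClique (G.neighborSet H)) :
    (elimVertex G v).IsClique ((elimVertex G v).neighborSet H) := by
  intro x hx y hy hxy
  simp only [SimpleGraph.mem_neighborSet, elimVertex] at hx hy ⊢
  obtain ⟨hHx, hHv, hxv, hx'⟩ := hx
  obtain ⟨hHy, _, hyv, hy'⟩ := hy
  refine ⟨hxy, hxv, hyv, ?_⟩
  rcases hx' with hx' | ⟨hHv', hxv'⟩ <;> rcases hy' with hy' | ⟨hHv'', hyv'⟩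
  · exact Or.inl (h hx' hy' hxy)
  · exact Or.inr ⟨h hx' hHv'' hxv, hyv'⟩
  · exact Or.inr ⟨hxv', h hy' hHv' hyv⟩
  · exact Or.inr ⟨hxv', hyv'⟩

lemma aux_clique_elimList {V : Type*} {G : SimpleGraph V} {H : V}
    (h : G.IsClique (G.neighborSet H)) (l : List V) :
    (elimList G l).IsClique ((elimList G l).neighborSet H) := by
  induction l generalizing G with
  | nil => exact h
  | cons a l ih => exact ih (aux_clique_elim h)

/-- Let `G'` be a finite DAG (edge relation `E` on `V`), `H` a root
vertex of `G'` having exactly one child `c`, and `U` a set of vertices with `H ∉ U` and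
`c ∉ U`. Let `G2` be obtained from the moral graph of `G'` by eliminating, in any order
`l`, all vertices other than those in `U ∪ {H}`. Then the set of neighbors of `H` in
`G2` forms a clique in `G2`; consequently, eliminating `H` from `G2` adds no fill-in
edges (every adjacency of the resulting graph is already an adjacency of `G2`). -/
theorem stmt17 {V : Type*} [Fintype V] (E : V → V → Prop)
    (hdag : IsAcyclicDigraph E)
    (H c : V) (hroot : IsRoot E H) (hchild : ∀ d, E H d ↔ d = c)
    (U : Set V) (hHU : H ∉ U) (hcU : c ∉ U)
    (l : List V) (hnd : l.Nodup) (hl : ∀ v : V, v ∈ l ↔ v ∉ insert H U) :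
    (elimList (MoralGraph E) l).IsClique ((elimList (MoralGraph E) l).neighborSet H) ∧
      ∀ x y : V, (elimVertex (elimList (MoralGraph E) l) H).Adj x y →
        (elimList (MoralGraph E) l).Adj x y := by
  have hM : (MoralGraph E).IsClique ((MoralGraph E).neighborSet H) := by
    intro x hx y hy hxy
    simp only [SimpleGraph.mem_neighborSet, MoralGraph] at hx hy ⊢
    obtain ⟨hHx, hx'⟩ := hx
    obtain ⟨hHy, hy'⟩ := hy
    have hx2 : x = c ∨ E x c := by
      rcases hx' with h1 | h1 | ⟨z, h1, h2⟩
      · exact Or.inl ((hchild x).mp h1)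
      · exact absurd h1 (hroot x)
      · exact Or.inr (((hchild z).mp h1) ▸ h2)
    have hy2 : y = c ∨ E y c := by
      rcases hy' with h1 | h1 | ⟨z, h1, h2⟩
      · exact Or.inl ((hchild y).mp h1)
      · exact absurd h1 (hroot y)
      · exact Or.inr (((hchild z).mp h1) ▸ h2)
    refine ⟨hxy, ?_⟩
    rcases hx2 with rfl | hx2 <;> rcases hy2 with rfl | hy2
    · exact absurd rfl hxy
    · exact Or.inr (Or.inl hy2)
    · exact Or.inl hx2
    · exact Or.inr (Or.inr ⟨c, hx2, hy2⟩)
  have hcl := aux_clique_elimList hM l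
  refine ⟨hcl, fun x y hxy => ?_⟩
  obtain ⟨hne, hxH, hyH, h⟩ := hxy
  rcases h with h | ⟨h1, h2⟩
  · exact h
  · exact hcl h1.symm h2.symm hne
end
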